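/- arXiv:math/0310062 — 7 statements merged into one kernel-verified Lean document; each statement's English description precedes it below -/
import Mathlib

section
/- For every integer m ≥ 2, 2ζ(m,1) = mζ(m+1) − Σ_{j=1}^{m−2} ζ(m−j)ζ(j+1), where ζ(m,1) = Σ_{n>k>0} n^{−m} k^{−1} is the double zeta value. -/
open scoped BigOperators

noncomputable def rzeta (s : ℝ) : ℝ := ∑' n : ℕ, ((n : ℝ) + 1) ^ (-s)

noncomputable def doubleZeta (m : ℕ) : ℝ :=
  ∑' p : {p : ℕ × ℕ // p.2 < p.1 ∧ 0 < p.2}, (1 / (p.1.1 : ℝ) ^ m) * (1 / (p.1.2 : ℝ))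

/-! ## Auxiliary definitions -/

noncomputable def Zz (k : ℕ) : ℝ := ∑' n : ℕ, 1 / ((n : ℝ) + 1) ^ k
noncomputable def Hh (c : ℕ) : ℝ := ∑ i ∈ Finset.range c, 1 / ((i : ℝ) + 1)
noncomputable def Ff (s t : ℕ) (p : ℕ × ℕ) : ℝ :=
  (1 / ((p.1 : ℝ) + 1) ^ s) * (1 / ((p.2 : ℝ) + 1) ^ t)
noncomputable def gg (s t : ℕ) (p : ℕ × ℕ) : ℝ :=
  1 / (((p.1 : ℝ) + p.2 + 2) ^ s * ((p.2 : ℝ) + 1) ^ t)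
noncomputable def Aa (m : ℕ) (p : ℕ × ℕ) : ℝ :=
  1 / (((p.2 : ℝ) + 1) ^ (m-1) * (((p.1 : ℝ) + p.2 + 2) * ((p.1 : ℝ) + 1)))
noncomputable def Bb (m : ℕ) (p : ℕ × ℕ) : ℝ :=
  1 / (((p.1 : ℝ) + p.2 + 2) ^ m * ((p.1 : ℝ) + 1))
noncomputable def Dlt (s t : ℕ) : ℝ := ∑' p : {p : ℕ × ℕ // p.2 < p.1}, Ff s t p.val

/-! ## rpow estimates -/

lemma rpow_split (z : ℝ) (hz : 0 ≤ z) : z ^ (3/2 : ℝ) = z ^ (1/2:ℝ) * z := by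
  have h : (3/2:ℝ) = 1/2 + 1 := by norm_num
  rw [h, Real.rpow_add' hz (by norm_num), Real.rpow_one]

lemma rpow32_mul_le {x y : ℝ} (hx : 1 ≤ x) (hy : 1 ≤ y) :
    x ^ (3/2 : ℝ) * y ^ (3/2 : ℝ) ≤ (x + y) ^ 2 * y := by
  have hx0 : (0:ℝ) ≤ x := by linarith
  have hy0 : (0:ℝ) ≤ y := by linarith
  have hn0 : (0:ℝ) ≤ x + y := by linarith
  have h1 : x ^ (3/2 : ℝ) ≤ (x+y) ^ (3/2:ℝ) :=
    Real.rpow_le_rpow hx0 (by linarith) (by norm_num)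
  have h3 : y ^ (1/2 : ℝ) ≤ (x+y) ^ (1/2:ℝ) :=
    Real.rpow_le_rpow hy0 (by linarith) (by norm_num)
  calc x ^ (3/2 : ℝ) * y ^ (3/2 : ℝ) = x ^ (3/2:ℝ) * y ^ (1/2:ℝ) * y := by
        rw [rpow_split y hy0]; ring
    _ ≤ (x+y) ^ (3/2:ℝ) * (x+y) ^ (1/2:ℝ) * y := by
        apply mul_le_mul_of_nonneg_right _ hy0
        exact mul_le_mul h1 h3 (Real.rpow_nonneg hy0 _) (Real.rpow_nonneg hn0 _)
    _ = (x+y) ^ 2 * y := by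
        rw [← Real.rpow_add' hn0 (by norm_num)]
        norm_num

lemma rpow32_mul_le' {x y : ℝ} (hx : 1 ≤ x) (hy : 1 ≤ y) :
    x ^ (3/2 : ℝ) * y ^ (3/2 : ℝ) ≤ y * (x + y) * x := by
  have hx0 : (0:ℝ) ≤ x := by linarith
  have hy0 : (0:ℝ) ≤ y := by linarith
  have hn0 : (0:ℝ) ≤ x + y := by linarith
  have h3 : y ^ (1/2 : ℝ) ≤ (x+y) ^ (1/2:ℝ) :=
    Real.rpow_le_rpow hy0 (by linarith) (by norm_num)
  have h4 : x ^ (1/2 : ℝ) ≤ (x+y) ^ (1/2:ℝ) :=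
    Real.rpow_le_rpow hx0 (by linarith) (by norm_num)
  calc x ^ (3/2 : ℝ) * y ^ (3/2 : ℝ) = (x ^ (1/2:ℝ) * y ^ (1/2:ℝ)) * (x * y) := by
        rw [rpow_split x hx0, rpow_split y hy0]; ring
    _ ≤ ((x+y) ^ (1/2:ℝ) * (x+y) ^ (1/2:ℝ)) * (x * y) := by
        apply mul_le_mul_of_nonneg_right _ (by positivity)
        exact mul_le_mul h4 h3 (Real.rpow_nonneg hy0 _) (Real.rpow_nonneg hn0 _)
    _ = (x+y) * (x*y) := by
        rw [← Real.rpow_add' hn0 (by norm_num)]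
        norm_num
    _ = y * (x + y) * x := by ring

/-! ## Summability -/

lemma summable_Zz {k : ℕ} (hk : 2 ≤ k) : Summable (fun n : ℕ => 1 / ((n : ℝ) + 1) ^ k) := by
  have h := Real.summable_one_div_nat_pow.mpr hk
  have h2 := h.comp_injective (add_left_injective 1)
  apply h2.congr
  intro n
  simp [Function.comp]

lemma summable_rpow32 : Summable (fun n : ℕ => 1 / ((n : ℝ) + 1) ^ (3/2 : ℝ)) := by
  have h := Real.summable_one_div_nat_rpow.mpr (by norm_num : (1:ℝ) < 3/2)
  have h2 := h.comp_injective (add_left_injective 1)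
  apply h2.congr
  intro n
  simp [Function.comp]

set_option maxHeartbeats 1000000 in
lemma summable_maj : Summable (fun p : ℕ × ℕ =>
    (1 / ((p.1 : ℝ) + 1) ^ (3/2 : ℝ)) * (1 / ((p.2 : ℝ) + 1) ^ (3/2 : ℝ))) :=
  Summable.mul_of_nonneg summable_rpow32 summable_rpow32
    (fun n => by positivity) (fun n => by positivity)

lemma summable_gg {s t : ℕ} (hs : 2 ≤ s) (ht : 1 ≤ t) : Summable (gg s t) := by
  apply Summable.of_nonneg_of_le (fun p => by unfold gg; positivity) _ summable_maj
  rintro ⟨a, b⟩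
  have hx : (1:ℝ) ≤ (a:ℝ) + 1 := by simp [Nat.cast_nonneg]
  have hy : (1:ℝ) ≤ (b:ℝ) + 1 := by simp [Nat.cast_nonneg]
  show 1 / (((a:ℝ) + b + 2) ^ s * ((b:ℝ) + 1) ^ t) ≤ _
  rw [one_div_mul_one_div]
  apply one_div_le_one_div_of_le (by positivity)
  have hxy : ((a:ℝ)+1) + ((b:ℝ)+1) = (a:ℝ) + b + 2 := by ring
  calc ((a:ℝ)+1) ^ (3/2:ℝ) * ((b:ℝ)+1) ^ (3/2:ℝ)
      ≤ (((a:ℝ)+1) + ((b:ℝ)+1))^2 * ((b:ℝ)+1) := rpow32_mul_le hx hy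
    _ = ((a:ℝ) + b + 2)^2 * ((b:ℝ)+1) := by rw [hxy]
    _ ≤ ((a:ℝ) + b + 2)^s * ((b:ℝ)+1)^t := by
        apply mul_le_mul
        · exact pow_le_pow_right₀ (by linarith) hs
        · exact le_self_pow₀ (by linarith) (by omega)
        · linarith
        · positivity

lemma summable_aa {m : ℕ} (hm : 2 ≤ m) : Summable (Aa m) := by
  apply Summable.of_nonneg_of_le (fun p => by unfold Aa; positivity) _ summable_maj
  rintro ⟨a, b⟩
  have hx : (1:ℝ) ≤ (a:ℝ) + 1 := by simp [Nat.cast_nonneg]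
  have hy : (1:ℝ) ≤ (b:ℝ) + 1 := by simp [Nat.cast_nonneg]
  show 1 / (((b:ℝ) + 1) ^ (m-1) * (((a:ℝ) + b + 2) * ((a:ℝ) + 1))) ≤ _
  rw [one_div_mul_one_div]
  apply one_div_le_one_div_of_le (by positivity)
  have hxy : ((a:ℝ)+1) + ((b:ℝ)+1) = (a:ℝ) + b + 2 := by ring
  calc ((a:ℝ)+1) ^ (3/2:ℝ) * ((b:ℝ)+1) ^ (3/2:ℝ)
      ≤ ((b:ℝ)+1) * (((a:ℝ)+1) + ((b:ℝ)+1)) * ((a:ℝ)+1) := rpow32_mul_le' hx hy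
    _ = ((b:ℝ)+1) * (((a:ℝ) + b + 2) * ((a:ℝ)+1)) := by rw [hxy]; ring
    _ ≤ ((b:ℝ)+1)^(m-1) * (((a:ℝ) + b + 2) * ((a:ℝ)+1)) := by
        apply mul_le_mul_of_nonneg_right _ (by positivity)
        exact le_self_pow₀ (by linarith) (by omega)

/-! ## Telescoping / harmonic sums -/

lemma hasSum_tele (c : ℕ) :
    HasSum (fun a : ℕ => 1/((a:ℝ)+(c:ℝ)+1) - 1/((a:ℝ)+(c:ℝ)+2)) (1/((c:ℝ)+1)) := by
  have hnn : ∀ a : ℕ, 0 ≤ 1/((a:ℝ)+(c:ℝ)+1) - 1/((a:ℝ)+(c:ℝ)+2) := by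
    intro a
    have h1 : (0:ℝ) < (a:ℝ)+(c:ℝ)+1 := by positivity
    have := one_div_le_one_div_of_le h1 (by linarith : (a:ℝ)+(c:ℝ)+1 ≤ (a:ℝ)+(c:ℝ)+2)
    linarith
  rw [hasSum_iff_tendsto_nat_of_nonneg hnn]
  have hps : ∀ N : ℕ, ∑ a ∈ Finset.range N, (1/((a:ℝ)+(c:ℝ)+1) - 1/((a:ℝ)+(c:ℝ)+2))
      = 1/((c:ℝ)+1) - 1/((N:ℝ)+(c:ℝ)+1) := by
    intro N
    calc ∑ a ∈ Finset.range N, (1/((a:ℝ)+(c:ℝ)+1) - 1/((a:ℝ)+(c:ℝ)+2))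
        = ∑ a ∈ Finset.range N, ((fun i : ℕ => 1/((i:ℝ)+(c:ℝ)+1)) a
            - (fun i : ℕ => 1/((i:ℝ)+(c:ℝ)+1)) (a+1)) := by
          apply Finset.sum_congr rfl
          intro i _
          push_cast
          ring_nf
      _ = 1/((c:ℝ)+1) - 1/((N:ℝ)+(c:ℝ)+1) := by
          rw [Finset.sum_range_sub']
          norm_num
  simp_rw [hps]
  have h0 : Filter.Tendsto (fun N : ℕ => 1/((N:ℝ)+(c:ℝ)+1)) Filter.atTop (nhds 0) := by
    have := (tendsto_one_div_add_atTop_nhds_zero_nat (𝕜 := ℝ)).comp (Filter.tendsto_add_atTop_nat c)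
    apply this.congr
    intro n
    simp [Function.comp]
  have := (tendsto_const_nhds (x := 1/((c:ℝ)+1)) (f := Filter.atTop (α := ℕ))).sub h0
  simpa using this

lemma hasSum_harmonic {c : ℕ} (hc : 1 ≤ c) :
    HasSum (fun a : ℕ => 1 / (((a:ℝ)+1) * ((a:ℝ)+(c:ℝ)+1))) (Hh c / c) := by
  have key : ∀ a : ℕ, 1 / (((a:ℝ)+1) * ((a:ℝ)+(c:ℝ)+1))
      = ∑ i ∈ Finset.range c, (1/(c:ℝ)) * (1/((a:ℝ)+(i:ℝ)+1) - 1/((a:ℝ)+(i:ℝ)+2)) := by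
    intro a
    rw [← Finset.mul_sum]
    have htel : ∑ i ∈ Finset.range c, (1/((a:ℝ)+(i:ℝ)+1) - 1/((a:ℝ)+(i:ℝ)+2))
        = 1/((a:ℝ)+1) - 1/((a:ℝ)+(c:ℝ)+1) := by
      calc ∑ i ∈ Finset.range c, (1/((a:ℝ)+(i:ℝ)+1) - 1/((a:ℝ)+(i:ℝ)+2))
          = ∑ i ∈ Finset.range c, ((fun j : ℕ => 1/((a:ℝ)+(j:ℝ)+1)) i
              - (fun j : ℕ => 1/((a:ℝ)+(j:ℝ)+1)) (i+1)) := by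
            apply Finset.sum_congr rfl
            intro i _
            push_cast
            ring_nf
        _ = 1/((a:ℝ)+1) - 1/((a:ℝ)+(c:ℝ)+1) := by
            rw [Finset.sum_range_sub']
            norm_num
    rw [htel]
    have hc0 : (c:ℝ) ≠ 0 := by positivity
    have h1 : ((a:ℝ)+1) ≠ 0 := by positivity
    have h2 : ((a:ℝ)+(c:ℝ)+1) ≠ 0 := by positivity
    field_simp
    ring
  have hs : HasSum (fun a : ℕ => ∑ i ∈ Finset.range c,
      (1/(c:ℝ)) * (1/((a:ℝ)+(i:ℝ)+1) - 1/((a:ℝ)+(i:ℝ)+2)))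
      (∑ i ∈ Finset.range c, (1/(c:ℝ)) * (1/((i:ℝ)+1))) := by
    apply hasSum_sum
    intro i _
    exact (hasSum_tele i).mul_left _
  rw [show Hh c / c = ∑ i ∈ Finset.range c, (1/(c:ℝ)) * (1/((i:ℝ)+1)) by
    rw [← Finset.mul_sum, Hh]; ring]
  simp only [key]
  exact hs

/-! ## Partial fraction identity -/

lemma pf (m : ℕ) (hm : 2 ≤ m) (k d : ℝ) (hk : 0 < k) (hd : 0 < d) :
    ∑ s ∈ Finset.Icc 2 m, 1/((k+d)^s * k^(m+1-s))
      = 1/(k^(m-1)*((k+d)*d)) - 1/((k+d)^m * d) := by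
  have hn : (0:ℝ) < k + d := by linarith
  have hk0 : k ≠ 0 := ne_of_gt hk
  have hd0 : d ≠ 0 := ne_of_gt hd
  have hn0 : k + d ≠ 0 := ne_of_gt hn
  induction m, hm using Nat.le_induction with
  | base =>
      rw [Finset.Icc_self, Finset.sum_singleton]
      norm_num
      field_simp
      ring
  | succ n hn2 ih =>
      obtain ⟨e, rfl⟩ : ∃ e, n = e + 2 := ⟨n - 2, by omega⟩
      rw [← Finset.insert_Icc_right_eq_Icc_add_one (by omega), Finset.sum_insert (by simp)]
      have h1 : ∑ s ∈ Finset.Icc 2 (e+2), 1/((k+d)^s * k^(e+2+1+1-s))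
          = (1/k) * ∑ s ∈ Finset.Icc 2 (e+2), 1/((k+d)^s * k^(e+2+1-s)) := by
        rw [Finset.mul_sum]
        apply Finset.sum_congr rfl
        intro s hs
        rw [Finset.mem_Icc] at hs
        have h2 : e+2+1+1-s = (e+2+1-s)+1 := by omega
        rw [h2, pow_succ]
        field_simp
      rw [h1, ih]
      have h3 : e+2+1+1-(e+2+1) = 1 := by omega
      have h4 : e+2+1-1 = e+2 := by omega
      have h5 : e+2-1 = e+1 := by omega
      rw [h3, h4, h5, pow_one]
      field_simp
      ring

/-! ## Equivs and representations of the double zeta -/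

def eSh : ℕ × ℕ ≃ {p : ℕ × ℕ // p.2 < p.1} where
  toFun p := ⟨(p.1 + p.2 + 1, p.2), by show p.2 < p.1 + p.2 + 1; omega⟩
  invFun q := (q.val.1 - q.val.2 - 1, q.val.2)
  left_inv p := by
    cases p with
    | mk a b => simp; omega
  right_inv q := by
    rcases q with ⟨⟨n, k⟩, h⟩
    simp only at h
    apply Subtype.ext
    simp only [Prod.mk.injEq]
    exact ⟨by omega, trivial⟩

lemma Ff_eSh (s t : ℕ) (p : ℕ × ℕ) : Ff s t (eSh p).val = gg s t p := by
  rcases p with ⟨a, b⟩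
  simp only [Ff, gg, eSh, Equiv.coe_fn_mk]
  push_cast
  rw [div_mul_div_comm, one_mul]
  ring_nf

lemma Dlt_eq (s t : ℕ) : Dlt s t = ∑' p : ℕ × ℕ, gg s t p := by
  rw [Dlt, ← eSh.tsum_eq (fun q : {p : ℕ × ℕ // p.2 < p.1} => Ff s t q.val)]
  exact tsum_congr (fun p => Ff_eSh s t p)

lemma summable_sub_Ff {s t : ℕ} (hst : Summable (gg s t)) :
    Summable (fun q : {p : ℕ × ℕ // p.2 < p.1} => Ff s t q.val) := by
  rw [← eSh.summable_iff]
  exact hst.congr (fun p => (Ff_eSh s t p).symm)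

set_option maxHeartbeats 1000000 in
lemma summable_Ff {s t : ℕ} (hs : 2 ≤ s) (ht : 2 ≤ t) : Summable (Ff s t) := by
  have h := Summable.mul_of_nonneg (f := fun n : ℕ => 1 / ((n : ℝ) + 1) ^ s)
    (g := fun n : ℕ => 1 / ((n : ℝ) + 1) ^ t) (summable_Zz hs) (summable_Zz ht)
    (fun n => by positivity) (fun n => by positivity)
  exact h

def eSw : {p : ℕ × ℕ // p.1 < p.2} ≃ {p : ℕ × ℕ // p.2 < p.1} where
  toFun q := ⟨(q.val.2, q.val.1), q.2⟩
  invFun q := ⟨(q.val.2, q.val.1), q.2⟩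
  left_inv _ := rfl
  right_inv _ := rfl

def eDiag : ℕ ≃ {p : ℕ × ℕ // p.1 = p.2} where
  toFun n := ⟨(n, n), rfl⟩
  invFun q := q.val.1
  left_inv n := rfl
  right_inv q := by
    rcases q with ⟨⟨n, k⟩, h⟩
    simp only at h
    subst h
    rfl

/-! ## Stuffle -/

lemma stuffle {s t : ℕ} (hs : 2 ≤ s) (ht : 2 ≤ t) :
    Zz s * Zz t = Dlt s t + Dlt t s + Zz (s + t) := by
  have hF : Summable (Ff s t) := summable_Ff hs ht
  have h1 : Zz s * Zz t = ∑' p : ℕ × ℕ, Ff s t p :=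
    Summable.tsum_mul_tsum (summable_Zz hs) (summable_Zz ht) hF
  set U : Set (ℕ × ℕ) := {p | p.2 < p.1} with hUdef
  set V : Set (ℕ × ℕ) := {p | p.1 < p.2} with hVdef
  set W : Set (ℕ × ℕ) := {p | p.1 = p.2} with hWdef
  have hpt : ∀ p, Ff s t p
      = U.indicator (Ff s t) p + V.indicator (Ff s t) p + W.indicator (Ff s t) p := by
    intro p
    simp only [Set.indicator_apply, hUdef, hVdef, hWdef, Set.mem_setOf_eq]
    split_ifs <;> first | (exfalso; omega) | ring
  have hU : Summable (U.indicator (Ff s t)) := hF.indicator U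
  have hV : Summable (V.indicator (Ff s t)) := hF.indicator V
  have hW : Summable (W.indicator (Ff s t)) := hF.indicator W
  have h2 : ∑' p : ℕ × ℕ, Ff s t p
      = (∑' p, U.indicator (Ff s t) p) + (∑' p, V.indicator (Ff s t) p)
        + (∑' p, W.indicator (Ff s t) p) := by
    rw [tsum_congr hpt, Summable.tsum_add (hU.add hV) hW, Summable.tsum_add hU hV]
  have hUe : (∑' p, U.indicator (Ff s t) p) = Dlt s t := by
    rw [← tsum_subtype U (Ff s t)]
    rfl
  have hVe : (∑' p, V.indicator (Ff s t) p) = Dlt t s := by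
    rw [← tsum_subtype V (Ff s t)]
    have := eSw.tsum_eq (fun u : {p : ℕ × ℕ // p.2 < p.1} => Ff t s u.val)
    rw [Dlt, ← this]
    apply tsum_congr
    intro q
    show Ff s t q.val = Ff t s (q.val.2, q.val.1)
    simp only [Ff]
    ring
  have hWe : (∑' p, W.indicator (Ff s t) p) = Zz (s + t) := by
    rw [← tsum_subtype W (Ff s t)]
    have key : ∑' q : {p : ℕ × ℕ // p.1 = p.2}, Ff s t q.val = Zz (s + t) := by
      rw [← eDiag.tsum_eq (fun q : {p : ℕ × ℕ // p.1 = p.2} => Ff s t q.val)]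
      apply tsum_congr
      intro n
      show Ff s t (n, n) = 1 / ((n:ℝ) + 1) ^ (s + t)
      simp only [Ff, pow_add]
      rw [div_mul_div_comm, one_mul]
    exact key
  rw [h1, h2, hUe, hVe, hWe]

/-! ## Representation of `Dlt m 1` via harmonic numbers -/

lemma indicator_summable {m : ℕ} (hm : 2 ≤ m) :
    Summable (({p : ℕ × ℕ | p.2 < p.1}).indicator (Ff m 1)) := by
  rw [← summable_subtype_iff_indicator]
  exact summable_sub_Ff (summable_gg hm le_rfl)

lemma inner_eval {m : ℕ} (n : ℕ) :
    ∑' k : ℕ, ({p : ℕ × ℕ | p.2 < p.1}).indicator (Ff m 1) (n, k)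
      = (1 / ((n:ℝ) + 1) ^ m) * Hh n := by
  rw [tsum_eq_sum (s := Finset.range n) (by
    intro k hk
    apply Set.indicator_of_notMem
    simp only [Set.mem_setOf_eq]
    simp at hk
    omega)]
  have : ∀ k ∈ Finset.range n, ({p : ℕ × ℕ | p.2 < p.1}).indicator (Ff m 1) (n, k)
      = (1 / ((n:ℝ) + 1) ^ m) * (1 / ((k:ℝ) + 1)) := by
    intro k hk
    simp at hk
    rw [Set.indicator_of_mem (by simpa using hk)]
    simp [Ff]
  rw [Finset.sum_congr rfl this, ← Finset.mul_sum, Hh]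

lemma Dlt_m1 {m : ℕ} (hm : 2 ≤ m) :
    Dlt m 1 = ∑' n : ℕ, (1 / ((n:ℝ) + 1) ^ m) * Hh n := by
  have h1 : Dlt m 1 = ∑' p : ℕ × ℕ, ({p : ℕ × ℕ | p.2 < p.1}).indicator (Ff m 1) p :=
    tsum_subtype {p : ℕ × ℕ | p.2 < p.1} (Ff m 1)
  rw [h1, Summable.tsum_prod' (indicator_summable hm) (fun b => (indicator_summable hm).prod_factor b)]
  exact tsum_congr (fun n => inner_eval n)

lemma summable_harm {m : ℕ} (hm : 2 ≤ m) :
    Summable (fun n : ℕ => (1 / ((n:ℝ) + 1) ^ m) * Hh n) := by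
  have := (indicator_summable hm).prod
  apply this.congr
  intro n
  exact inner_eval n

/-! ## Evaluation of the `Aa` sum -/

lemma tsum_Aa {m : ℕ} (hm : 2 ≤ m) :
    ∑' p : ℕ × ℕ, Aa m p = Dlt m 1 + Zz (m + 1) := by
  have hA : Summable (Aa m) := summable_aa hm
  have hA' : Summable (fun q : ℕ × ℕ => Aa m (q.2, q.1)) := by
    rw [← (Equiv.prodComm ℕ ℕ).summable_iff]
    exact hA.congr (fun p => rfl)
  have h1 : ∑' p : ℕ × ℕ, Aa m p = ∑' q : ℕ × ℕ, Aa m (q.2, q.1) :=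
    ((Equiv.prodComm ℕ ℕ).tsum_eq (Aa m)).symm
  rw [h1, Summable.tsum_prod' hA' (fun b => hA'.prod_factor b)]
  have h2 : ∀ b : ℕ, ∑' a : ℕ, Aa m (a, b) = Hh (b+1) * (1 / ((b:ℝ)+1) ^ m) := by
    intro b
    have hhar := (hasSum_harmonic (c := b+1) (by omega)).mul_left (1/((b:ℝ)+1)^(m-1))
    have hcongr : ∀ a : ℕ,
        (1/((b:ℝ)+1)^(m-1)) * (1 / (((a:ℝ)+1) * ((a:ℝ)+((b+1:ℕ):ℝ)+1))) = Aa m (a, b) := by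
      intro a
      simp only [Aa]
      push_cast
      rw [one_div_mul_one_div]
      ring_nf
    have hhar2 := hhar.congr_fun (fun a => (hcongr a).symm)
    rw [hhar2.tsum_eq]
    have hcast : ((b+1:ℕ):ℝ) = (b:ℝ)+1 := by push_cast; ring
    rw [hcast]
    have hpow : ((b:ℝ)+1)^(m-1) * ((b:ℝ)+1) = ((b:ℝ)+1)^m := by
      rw [← pow_succ, Nat.sub_add_cancel (by omega : 1 ≤ m)]
    rw [div_mul_div_comm, one_mul, hpow, div_eq_mul_one_div]
  calc ∑' (b : ℕ) (a : ℕ), Aa m (a, b)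
      = ∑' b : ℕ, Hh (b+1) * (1 / ((b:ℝ)+1) ^ m) := tsum_congr h2
    _ = ∑' b : ℕ, ((1 / ((b:ℝ)+1) ^ m) * Hh b + 1 / ((b:ℝ)+1) ^ (m+1)) := by
        apply tsum_congr
        intro b
        rw [Hh, Finset.sum_range_succ, ← Hh, add_mul, mul_comm (Hh b) _]
        congr 1
        rw [one_div_mul_one_div, ← pow_succ']
    _ = Dlt m 1 + Zz (m + 1) := by
        rw [Summable.tsum_add (summable_harm hm) (summable_Zz (by omega : 2 ≤ m + 1))]
        rw [← Dlt_m1 hm]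
        rfl

/-! ## The `Bb` sum -/

lemma summable_Bb {m : ℕ} (hm : 2 ≤ m) : Summable (Bb m) := by
  have h : Summable (fun q : ℕ × ℕ => gg m 1 (q.2, q.1)) := by
    rw [← (Equiv.prodComm ℕ ℕ).summable_iff]
    exact (summable_gg hm le_rfl).congr (fun p => rfl)
  apply h.congr
  intro p
  simp only [gg, Bb, pow_one]
  ring_nf

lemma tsum_Bb {m : ℕ} (hm : 2 ≤ m) : ∑' p : ℕ × ℕ, Bb m p = Dlt m 1 := by
  rw [Dlt_eq m 1, ← (Equiv.prodComm ℕ ℕ).tsum_eq (gg m 1)]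
  apply tsum_congr
  intro p
  show Bb m p = gg m 1 (p.2, p.1)
  simp only [gg, Bb, pow_one]
  ring_nf

/-! ## Euler sum formula -/

lemma sum_formula {m : ℕ} (hm : 2 ≤ m) :
    ∑ s ∈ Finset.Icc 2 m, Dlt s (m+1-s) = Zz (m+1) := by
  have hkey : ∀ p : ℕ × ℕ, ∑ s ∈ Finset.Icc 2 m, gg s (m+1-s) p = Aa m p - Bb m p := by
    intro p
    have hpf := pf m hm ((p.2:ℝ)+1) ((p.1:ℝ)+1) (by positivity) (by positivity)
    rw [show ((p.2:ℝ)+1) + ((p.1:ℝ)+1) = (p.1:ℝ) + p.2 + 2 by ring] at hpf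
    simpa [gg, Aa, Bb] using hpf
  have hhs : HasSum (fun p : ℕ × ℕ => ∑ s ∈ Finset.Icc 2 m, gg s (m+1-s) p)
      (∑ s ∈ Finset.Icc 2 m, Dlt s (m+1-s)) := by
    apply hasSum_sum
    intro s hs
    rw [Finset.mem_Icc] at hs
    rw [Dlt_eq]
    exact (summable_gg hs.1 (by omega)).hasSum
  rw [funext hkey] at hhs
  have hhs2 : HasSum (fun p : ℕ × ℕ => Aa m p - Bb m p)
      ((∑' p : ℕ × ℕ, Aa m p) - ∑' p : ℕ × ℕ, Bb m p) :=
    (summable_aa hm).hasSum.sub (summable_Bb hm).hasSum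
  rw [hhs.unique hhs2, tsum_Aa hm, tsum_Bb hm]
  ring

/-! ## Bridges to the statement -/

lemma rzeta_nat (k : ℕ) : rzeta (k : ℝ) = Zz k := by
  unfold rzeta Zz
  apply tsum_congr
  intro n
  rw [Real.rpow_neg (by positivity), Real.rpow_natCast, one_div]

def e2 : {p : ℕ × ℕ // p.2 < p.1} ≃ {p : ℕ × ℕ // p.2 < p.1 ∧ 0 < p.2} where
  toFun q := ⟨(q.val.1 + 1, q.val.2 + 1), ⟨Nat.succ_lt_succ q.2, Nat.succ_pos _⟩⟩
  invFun r := ⟨(r.val.1 - 1, r.val.2 - 1), by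
    rcases r with ⟨⟨n, k⟩, h1, h2⟩
    simp only at h1 h2 ⊢
    omega⟩
  left_inv q := by
    apply Subtype.ext
    simp
  right_inv r := by
    rcases r with ⟨⟨n, k⟩, h1, h2⟩
    simp only at h1 h2
    apply Subtype.ext
    simp only [Prod.mk.injEq]
    exact ⟨by omega, by omega⟩

lemma doubleZeta_eq (m : ℕ) : doubleZeta m = Dlt m 1 := by
  rw [doubleZeta,
    ← e2.tsum_eq (fun r : {p : ℕ × ℕ // p.2 < p.1 ∧ 0 < p.2} =>
      (1 / (r.val.1 : ℝ) ^ m) * (1 / (r.val.2 : ℝ))), Dlt]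
  apply tsum_congr
  intro q
  show (1 / ((q.val.1 + 1 : ℕ) : ℝ) ^ m) * (1 / ((q.val.2 + 1 : ℕ) : ℝ)) = Ff m 1 q.val
  simp only [Ff, pow_one]
  push_cast
  ring_nf

/-! ## Main theorem -/

theorem euler_reduction (m : ℕ) (hm : 2 ≤ m) :
    2 * doubleZeta m =
      (m : ℝ) * rzeta (m + 1) -
        ∑ j ∈ Finset.Icc 1 (m - 2), rzeta (m - j) * rzeta (j + 1) := by
  have hz1 : rzeta ((m : ℝ) + 1) = Zz (m + 1) := by
    rw [show ((m:ℝ) + 1) = ((m + 1 : ℕ) : ℝ) by push_cast; ring, rzeta_nat]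
  have hterm : ∀ j ∈ Finset.Icc 1 (m-2), rzeta ((m:ℝ) - (j:ℝ)) * rzeta ((j:ℝ) + 1)
      = Dlt (m-j) (j+1) + Dlt (j+1) (m-j) + Zz (m+1) := by
    intro j hj
    rw [Finset.mem_Icc] at hj
    rw [show ((m:ℝ) - (j:ℝ)) = ((m - j : ℕ) : ℝ) by rw [Nat.cast_sub (by omega)],
      show ((j:ℝ) + 1) = ((j + 1 : ℕ) : ℝ) by push_cast; ring,
      rzeta_nat, rzeta_nat, stuffle (by omega) (by omega),
      show (m-j) + (j+1) = m+1 by omega]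
  have hsum1 : ∑ j ∈ Finset.Icc 1 (m-2), Dlt (m-j) (j+1)
      = ∑ s ∈ Finset.Icc 2 (m-1), Dlt s (m+1-s) := by
    apply Finset.sum_nbij' (fun j => m - j) (fun s => m - s)
    · intro j hj
      rw [Finset.mem_Icc] at hj ⊢
      omega
    · intro s hs
      rw [Finset.mem_Icc] at hs ⊢
      omega
    · intro j hj
      rw [Finset.mem_Icc] at hj
      omega
    · intro s hs
      rw [Finset.mem_Icc] at hs
      omega
    · intro j hj
      rw [Finset.mem_Icc] at hj
      rw [show m + 1 - (m - j) = j + 1 by omega]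
  have hsum2 : ∑ j ∈ Finset.Icc 1 (m-2), Dlt (j+1) (m-j)
      = ∑ s ∈ Finset.Icc 2 (m-1), Dlt s (m+1-s) := by
    apply Finset.sum_nbij' (fun j => j + 1) (fun s => s - 1)
    · intro j hj
      rw [Finset.mem_Icc] at hj ⊢
      omega
    · intro s hs
      rw [Finset.mem_Icc] at hs ⊢
      omega
    · intro j hj
      omega
    · intro s hs
      rw [Finset.mem_Icc] at hs
      omega
    · intro j hj
      rw [Finset.mem_Icc] at hj
      rw [show m + 1 - (j + 1) = m - j by omega]
  have hsf : ∑ s ∈ Finset.Icc 2 (m-1), Dlt s (m+1-s) = Zz (m+1) - Dlt m 1 := by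
    have h := sum_formula hm
    have hins : Finset.Icc 2 m = insert m (Finset.Icc 2 (m-1)) := by
      have := Finset.insert_Icc_right_eq_Icc_add_one (a := 2) (b := m - 1) (by omega)
      rw [show m - 1 + 1 = m by omega] at this
      exact this.symm
    rw [hins, Finset.sum_insert (by simp; omega)] at h
    rw [show m + 1 - m = 1 by omega] at h
    linarith
  have hbig : ∑ j ∈ Finset.Icc 1 (m-2), rzeta ((m:ℝ) - (j:ℝ)) * rzeta ((j:ℝ) + 1)
      = 2 * (Zz (m+1) - Dlt m 1) + ((m:ℝ) - 2) * Zz (m+1) := by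
    rw [Finset.sum_congr rfl hterm, Finset.sum_add_distrib, Finset.sum_add_distrib,
      hsum1, hsum2, hsf, Finset.sum_const, Nat.card_Icc,
      show m - 2 + 1 - 1 = m - 2 by omega, nsmul_eq_mul, Nat.cast_sub hm]
    push_cast
    ring
  rw [doubleZeta_eq, hz1, hbig]
  ring
end

section
/- The multiple zeta series ζ(s_1,…,s_k) = Σ_{n_1>⋯>n_k>0} Π_j n_j^{−s_j} converges absolutely whenever (s_1,…,s_k) ∈ ℂ^k satisfies Σ_{j=1}^r Re(s_j) > r for every 1 ≤ r ≤ k. -/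
open scoped BigOperators

/-- Abel-type lemma: if all partial sums of `c` are nonnegative and `y` is
nonnegative and antitone on `[0, k)`, then `∑ j < k, c j * y j ≥ 0`. -/
lemma mzv_abel_nonneg : ∀ (k : ℕ) (c y : ℕ → ℝ),
    (∀ r, r ≤ k → 0 ≤ ∑ j ∈ Finset.range r, c j) →
    (∀ i j, i ≤ j → j < k → y j ≤ y i) →
    (∀ j, j < k → 0 ≤ y j) →
    0 ≤ ∑ j ∈ Finset.range k, c j * y j := by
  intro k
  induction k with
  | zero => intro c y _ _ _; simp
  | succ k ih =>
    intro c y hc hmono hnn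
    have e1 : ∑ j ∈ Finset.range k, c j * (y j - y k)
        = (∑ j ∈ Finset.range k, c j * y j) - (∑ j ∈ Finset.range k, c j) * y k := by
      rw [Finset.sum_mul, ← Finset.sum_sub_distrib]
      exact Finset.sum_congr rfl fun j _ => by ring
    have key : ∑ j ∈ Finset.range (k+1), c j * y j
        = (∑ j ∈ Finset.range k, c j * (y j - y k)) + (∑ j ∈ Finset.range (k+1), c j) * y k := by
      rw [Finset.sum_range_succ (f := fun j => c j * y j), Finset.sum_range_succ (f := c), e1]
      ring
    rw [key]
    have h1 : 0 ≤ ∑ j ∈ Finset.range k, c j * (y j - y k) := by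
      apply ih c (fun j => y j - y k)
      · intro r hr; exact hc r (Nat.le_succ_of_le hr)
      · intro i j hij hj; simp only [sub_le_sub_iff_right]
        exact hmono i j hij (Nat.lt_succ_of_lt hj)
      · intro j hj
        have := hmono j k (Nat.le_of_lt hj) (Nat.lt_succ_self k)
        linarith
    have h2 : 0 ≤ (∑ j ∈ Finset.range (k+1), c j) * y k :=
      mul_nonneg (hc (k+1) le_rfl) (hnn k (Nat.lt_succ_self k))
    linarith

/-- Summability of products over pi types. -/
lemma mzv_summable_pi_prod {g : ℕ → ℝ} (hg : Summable g) (hg0 : ∀ n, 0 ≤ g n) :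
    ∀ k, Summable (fun f : Fin k → ℕ => ∏ j, g (f j)) := by
  intro k
  induction k with
  | zero =>
    exact (hasSum_fintype _).summable
  | succ k ih =>
    have h2 : 0 ≤ fun f : Fin k → ℕ => ∏ j, g (f j) :=
      fun f => Finset.prod_nonneg fun j _ => hg0 _
    have hprod : Summable (fun p : ℕ × (Fin k → ℕ) => g p.1 * ∏ j, g (p.2 j)) :=
      Summable.mul_of_nonneg (f := g) (g := fun f : Fin k → ℕ => ∏ j, g (f j)) hg ih hg0 h2
    apply (Equiv.summable_iff (Fin.consEquiv fun _ => ℕ)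
      (f := fun f : Fin (k+1) → ℕ => ∏ j, g (f j))).mp
    refine hprod.congr fun p => ?_
    simp [Function.comp, Fin.prod_univ_succ]

theorem mzv_abs_convergence (k : ℕ) (s : Fin k → ℂ)
    (h : ∀ r : ℕ, 1 ≤ r → r ≤ k →
      (r : ℝ) < ∑ j ∈ Finset.univ.filter (fun j : Fin k => (j : ℕ) < r), (s j).re) :
    Summable (fun n : {f : Fin k → ℕ // (∀ i j : Fin k, i < j → f j < f i) ∧ ∀ j, 0 < f j} =>
      ‖∏ j : Fin k, ((n.1 j : ℂ) ^ (-(s j)))‖) := by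
  rcases Nat.eq_zero_or_pos k with hk | hk
  · subst hk
    haveI : Finite {f : Fin 0 → ℕ // (∀ i j : Fin 0, i < j → f j < f i) ∧ ∀ j, 0 < f j} :=
      Subtype.finite
    exact Summable.of_finite
  -- notation
  set σ : ℕ → ℝ := fun j => if hj : j < k then (s ⟨j, hj⟩).re else 0 with hσ
  -- partial sums
  have hsum : ∀ r, r ≤ k →
      ∑ j ∈ Finset.univ.filter (fun j : Fin k => (j : ℕ) < r), (s j).re
        = ∑ j ∈ Finset.range r, σ j := by
    intro r hr
    rw [Finset.sum_filter]
    have h1 : ∀ j : Fin k, (if (j : ℕ) < r then (s j).re else 0)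
        = (fun m => if m < r then σ m else 0) (j : ℕ) := by
      intro j
      simp only [hσ, j.is_lt, dif_pos, Fin.eta]
    calc ∑ j : Fin k, (if (j : ℕ) < r then (s j).re else 0)
        = ∑ j ∈ Finset.range k, (if j < r then σ j else 0) := by
          rw [← Fin.sum_univ_eq_sum_range (fun m => if m < r then σ m else 0) k]
          exact Finset.sum_congr rfl fun j _ => h1 j
      _ = ∑ j ∈ (Finset.range k).filter (· < r), σ j := by rw [Finset.sum_filter]
      _ = ∑ j ∈ Finset.range r, σ j := by
          congr 1
          ext j
          simp only [Finset.mem_filter, Finset.mem_range]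
          omega
  -- choose δ
  have hne : (Finset.Icc 1 k).Nonempty := ⟨1, Finset.mem_Icc.mpr ⟨le_rfl, hk⟩⟩
  set δ : ℝ := ((Finset.Icc 1 k).inf' hne (fun r => (∑ j ∈ Finset.range r, σ j) - r)) / k
    with hδ
  have hδpos : 0 < δ := by
    apply div_pos _ (by exact_mod_cast hk)
    rw [Finset.lt_inf'_iff]
    intro r hr
    rw [Finset.mem_Icc] at hr
    have := h r hr.1 hr.2
    rw [hsum r hr.2] at this
    linarith
  have hδle : ∀ r, 1 ≤ r → r ≤ k → (k : ℝ) * δ ≤ (∑ j ∈ Finset.range r, σ j) - r := by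
    intro r h1r hrk
    rw [hδ, mul_div_cancel₀ _ (by exact_mod_cast hk.ne' : (k : ℝ) ≠ 0)]
    exact Finset.inf'_le _ (Finset.mem_Icc.mpr ⟨h1r, hrk⟩)
  -- the majorant
  have hexp : -(1 + δ) < -1 := by linarith
  have hgsum : Summable (fun n : ℕ => (n : ℝ) ^ (-(1 + δ))) :=
    Real.summable_nat_rpow.mpr hexp
  have hg0 : ∀ n : ℕ, 0 ≤ (n : ℝ) ^ (-(1 + δ)) := fun n =>
    Real.rpow_nonneg (Nat.cast_nonneg n) _
  have hmaj : Summable (fun f : Fin k → ℕ => ∏ j, ((f j : ℝ)) ^ (-(1 + δ))) :=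
    mzv_summable_pi_prod hgsum hg0 k
  have hmaj' := hmaj.subtype
    {f : Fin k → ℕ | (∀ i j : Fin k, i < j → f j < f i) ∧ ∀ j, 0 < f j}
  apply Summable.of_nonneg_of_le (fun n => norm_nonneg _) _ hmaj'
  -- the pointwise bound
  rintro ⟨n, hdec, hpos⟩
  have hn1 : ∀ j, (1 : ℝ) ≤ (n j : ℝ) := fun j => by exact_mod_cast hpos j
  have hn0 : ∀ j, (0 : ℝ) < (n j : ℝ) := fun j => lt_of_lt_of_le one_pos (hn1 j)
  have hnorm : ‖∏ j : Fin k, ((n j : ℂ) ^ (-(s j)))‖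
      = ∏ j : Fin k, (n j : ℝ) ^ (-(s j).re) := by
    rw [norm_prod]
    apply Finset.prod_congr rfl
    intro j _
    rw [Complex.norm_natCast_cpow_of_pos (hpos j), Complex.neg_re]
  rw [hnorm]
  -- key inequality via logs
  set y : ℕ → ℝ := fun j => if hj : j < k then Real.log (n ⟨j, hj⟩) else 0 with hy
  set c : ℕ → ℝ := fun j => σ j - (1 + δ) with hc
  have habel : 0 ≤ ∑ j ∈ Finset.range k, c j * y j := by
    apply mzv_abel_nonneg
    · intro r hr
      rcases Nat.eq_zero_or_pos r with hr0 | hr0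
      · subst hr0; simp
      have hkd := hδle r hr0 hr
      have hsumc : ∑ j ∈ Finset.range r, c j
          = (∑ j ∈ Finset.range r, σ j) - r * (1 + δ) := by
        simp only [hc]
        rw [Finset.sum_sub_distrib, Finset.sum_const, Finset.card_range, nsmul_eq_mul]
      rw [hsumc]
      have hrk : (r : ℝ) ≤ (k : ℝ) := by exact_mod_cast hr
      have hrd : (r : ℝ) * δ ≤ (k : ℝ) * δ :=
        mul_le_mul_of_nonneg_right hrk hδpos.le
      have hexp2 : (r : ℝ) * (1 + δ) = r + r * δ := by ring
      linarith
    · intro i j hij hj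
      have hi : i < k := lt_of_le_of_lt hij hj
      simp only [hy, dif_pos hi, dif_pos hj]
      apply Real.log_le_log (hn0 _)
      rcases eq_or_lt_of_le hij with rfl | hlt
      · exact le_rfl
      · exact_mod_cast le_of_lt (hdec ⟨i, hi⟩ ⟨j, hj⟩ hlt)
    · intro j hj
      simp only [hy, dif_pos hj]
      exact Real.log_nonneg (hn1 _)
  -- translate habel into the product inequality
  have hprodle : ∏ j : Fin k, (n j : ℝ) ^ (-(s j).re)
      ≤ ∏ j : Fin k, (n j : ℝ) ^ (-(1 + δ)) := by
    have hrw : ∀ (e : Fin k → ℝ), ∏ j : Fin k, (n j : ℝ) ^ (e j)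
        = Real.exp (∑ j : Fin k, Real.log (n j) * e j) := by
      intro e
      rw [Real.exp_sum]
      apply Finset.prod_congr rfl
      intro j _
      rw [Real.rpow_def_of_pos (hn0 j)]
    rw [hrw (fun j => -(s j).re), hrw (fun j => -(1 + δ)), Real.exp_le_exp]
    have hs : ∑ j ∈ Finset.range k, c j * y j
        = ∑ j : Fin k, ((s j).re - (1 + δ)) * Real.log (n j) := by
      rw [← Fin.sum_univ_eq_sum_range (fun m => c m * y m) k]
      apply Finset.sum_congr rfl
      intro j _
      simp only [hc, hy, hσ, j.is_lt, dif_pos, Fin.eta]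
    rw [hs] at habel
    have : ∑ j : Fin k, Real.log (n j) * (-(1 + δ))
        - ∑ j : Fin k, Real.log (n j) * (-(s j).re)
        = ∑ j : Fin k, ((s j).re - (1 + δ)) * Real.log (n j) := by
      rw [← Finset.sum_sub_distrib]
      apply Finset.sum_congr rfl
      intro j _; ring
    linarith [this ▸ habel]
  exact hprodle
end

section
/- For all non-negative integers m and n, Σ_{k=0}^m C(m,k)·C(n+k,m) = Σ_{k=0}^{min(m,n)} C(n,k)·C(m,k)·2^k. -/
open Finset

lemma aux_choose_sum (m j : ℕ) (h : j ≤ m) :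
    ∑ k ∈ Finset.range (m + 1), Nat.choose m k * Nat.choose k j =
      Nat.choose m j * 2 ^ (m - j) := by
  have hm : m + 1 = j + (m - j + 1) := by omega
  rw [hm, Finset.sum_range_add]
  have h1 : ∑ k ∈ Finset.range j, Nat.choose m k * Nat.choose k j = 0 := by
    apply Finset.sum_eq_zero
    intro k hk
    rw [Nat.choose_eq_zero_of_lt (Finset.mem_range.mp hk), Nat.mul_zero]
  rw [h1, Nat.zero_add]
  rw [← Nat.sum_range_choose (m - j), Finset.mul_sum]
  apply Finset.sum_congr rfl
  intro i hi
  have hi' : i ≤ m - j := by have := Finset.mem_range.mp hi; omega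
  have hi2 : j + i ≤ m := by omega
  rw [Nat.choose_mul (n := m) (Nat.le_add_right j i), Nat.add_sub_cancel_left]

theorem stuffle_binomial_identity (m n : ℕ) :
    ∑ k ∈ Finset.range (m + 1), Nat.choose m k * Nat.choose (n + k) m =
      ∑ k ∈ Finset.range (min m n + 1), Nat.choose n k * Nat.choose m k * 2 ^ k := by
  have step1 : ∑ k ∈ Finset.range (m + 1), Nat.choose m k * Nat.choose (n + k) m =
      ∑ i ∈ Finset.range (m + 1), Nat.choose n i * Nat.choose m i * 2 ^ i := by
    calc ∑ k ∈ Finset.range (m + 1), Nat.choose m k * Nat.choose (n + k) m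
        = ∑ k ∈ Finset.range (m + 1), ∑ i ∈ Finset.range (m + 1),
            Nat.choose n i * (Nat.choose m k * Nat.choose k (m - i)) := by
          apply Finset.sum_congr rfl; intro k _
          rw [Nat.add_choose_eq, Finset.Nat.sum_antidiagonal_eq_sum_range_succ_mk,
            Finset.mul_sum]
          apply Finset.sum_congr rfl; intro i _; ring
      _ = ∑ i ∈ Finset.range (m + 1), Nat.choose n i *
            ∑ k ∈ Finset.range (m + 1), Nat.choose m k * Nat.choose k (m - i) := by
          rw [Finset.sum_comm]
          apply Finset.sum_congr rfl; intro i _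
          rw [Finset.mul_sum]
      _ = ∑ i ∈ Finset.range (m + 1), Nat.choose n i * Nat.choose m i * 2 ^ i := by
          apply Finset.sum_congr rfl; intro i hi
          have hi' : i ≤ m := by
            have := Finset.mem_range.mp hi; omega
          rw [aux_choose_sum m (m - i) (Nat.sub_le m i)]
          rw [Nat.sub_sub_self hi', Nat.choose_symm hi']
          ring
  rw [step1]
  symm
  apply Finset.sum_subset
  · intro x hx
    simp only [Finset.mem_range] at *
    omega
  · intro x hx hx2
    simp only [Finset.mem_range] at *
    have : n < x := by omega
    rw [Nat.choose_eq_zero_of_lt this, Nat.zero_mul, Nat.zero_mul]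
end

section
/- For all positive integers m and n, the number of integer lattice points (b_1,…,b_m) ∈ ℤ^m with Σ_{j=1}^m |b_j| ≤ n equals the number of integer lattice points (b_1,…,b_n) ∈ ℤ^n with Σ_{j=1}^n |b_j| ≤ m. -/
open Finset

/-- The finset of lattice points in the closed ℓ¹-ball of radius `n` in `ℤ^m`. -/
private noncomputable def latticeBall (m n : ℕ) : Finset (Fin m → ℤ) :=
  (Fintype.piFinset fun _ => Finset.Icc (-(n : ℤ)) n).filter fun b => ∑ j, (b j).natAbs ≤ n

private lemma mem_latticeBall {m n : ℕ} {b : Fin m → ℤ} :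
    b ∈ latticeBall m n ↔ ∑ j, (b j).natAbs ≤ n := by
  simp only [latticeBall, mem_filter, Fintype.mem_piFinset, mem_Icc, and_iff_right_iff_imp]
  intro h j
  have : (b j).natAbs ≤ n :=
    le_trans (Finset.single_le_sum (f := fun j => (b j).natAbs)
      (fun _ _ => Nat.zero_le _) (Finset.mem_univ j)) h
  omega

private lemma natcard_eq_latticeBall (m n : ℕ) :
    Nat.card {b : Fin m → ℤ // ∑ j, (b j).natAbs ≤ n} = (latticeBall m n).card := by
  rw [← Nat.card_eq_finsetCard]
  exact Nat.card_congr (Equiv.subtypeEquivRight fun b => mem_latticeBall.symm)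

private lemma latticeBall_zero_right (m : ℕ) : (latticeBall m 0).card = 1 := by
  rw [Finset.card_eq_one]
  refine ⟨0, ?_⟩
  ext b
  simp only [mem_latticeBall, Finset.mem_singleton, Nat.le_zero, Finset.sum_eq_zero_iff,
    Finset.mem_univ, true_implies, Int.natAbs_eq_zero, funext_iff]
  simp

private lemma latticeBall_zero_left (n : ℕ) : (latticeBall 0 n).card = 1 := by
  rw [Finset.card_eq_one]
  refine ⟨fun i => i.elim0, ?_⟩
  ext b
  simp only [mem_latticeBall, Finset.mem_singleton]
  constructor
  · intro _; exact funext fun i => i.elim0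
  · intro _; simp

private lemma card_zero_fiber (m r : ℕ) :
    (((latticeBall (m + 1) r)).filter fun b => b 0 = 0).card = (latticeBall m r).card := by
  apply Finset.card_nbij' (i := fun b => Fin.tail b) (j := fun c => Fin.cons 0 c)
  · intro b hb
    rw [Finset.mem_coe, Finset.mem_filter, mem_latticeBall, Fin.sum_univ_succ] at hb
    rw [Finset.mem_coe, mem_latticeBall]
    simpa [Fin.tail, hb.2] using hb
  · intro c hc
    rw [Finset.mem_coe, mem_latticeBall] at hc
    rw [Finset.mem_coe, Finset.mem_filter, mem_latticeBall, Fin.sum_univ_succ]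
    simpa using hc
  · intro b hb
    rw [Finset.mem_coe, Finset.mem_filter] at hb
    rw [← hb.2]
    exact Fin.cons_self_tail b
  · intro c _
    simp [Fin.tail_cons]

private lemma card_pos_fiber (m n : ℕ) :
    ((latticeBall (m + 1) (n + 1)).filter fun b => 0 < b 0).card =
      ((latticeBall (m + 1) n).filter fun b => 0 ≤ b 0).card := by
  apply Finset.card_nbij' (i := fun b => Fin.cons (b 0 - 1) (Fin.tail b))
    (j := fun b => Fin.cons (b 0 + 1) (Fin.tail b))
  · intro b hb
    rw [Finset.mem_coe, Finset.mem_filter, mem_latticeBall, Fin.sum_univ_succ] at hb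
    rw [Finset.mem_coe, Finset.mem_filter, mem_latticeBall, Fin.sum_univ_succ]
    simp only [Fin.cons_zero, Fin.cons_succ, Fin.tail] at *
    obtain ⟨h1, h3⟩ := hb
    exact ⟨by omega, by omega⟩
  · intro b hb
    rw [Finset.mem_coe, Finset.mem_filter, mem_latticeBall, Fin.sum_univ_succ] at hb
    rw [Finset.mem_coe, Finset.mem_filter, mem_latticeBall, Fin.sum_univ_succ]
    simp only [Fin.cons_zero, Fin.cons_succ, Fin.tail] at *
    obtain ⟨h1, h3⟩ := hb
    exact ⟨by omega, by omega⟩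
  · intro b _
    simp only [Fin.cons_zero, Fin.tail_cons, sub_add_cancel]
    exact Fin.cons_self_tail b
  · intro b _
    simp only [Fin.cons_zero, Fin.tail_cons, add_sub_cancel_right]
    exact Fin.cons_self_tail b

private lemma card_neg_fiber (m n : ℕ) :
    ((latticeBall (m + 1) (n + 1)).filter fun b => b 0 < 0).card =
      ((latticeBall (m + 1) n).filter fun b => b 0 ≤ 0).card := by
  apply Finset.card_nbij' (i := fun b => Fin.cons (b 0 + 1) (Fin.tail b))
    (j := fun b => Fin.cons (b 0 - 1) (Fin.tail b))
  · intro b hb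
    rw [Finset.mem_coe, Finset.mem_filter, mem_latticeBall, Fin.sum_univ_succ] at hb
    rw [Finset.mem_coe, Finset.mem_filter, mem_latticeBall, Fin.sum_univ_succ]
    simp only [Fin.cons_zero, Fin.cons_succ, Fin.tail] at *
    obtain ⟨h1, h3⟩ := hb
    exact ⟨by omega, by omega⟩
  · intro b hb
    rw [Finset.mem_coe, Finset.mem_filter, mem_latticeBall, Fin.sum_univ_succ] at hb
    rw [Finset.mem_coe, Finset.mem_filter, mem_latticeBall, Fin.sum_univ_succ]
    simp only [Fin.cons_zero, Fin.cons_succ, Fin.tail] at *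
    obtain ⟨h1, h3⟩ := hb
    exact ⟨by omega, by omega⟩
  · intro b _
    simp only [Fin.cons_zero, Fin.tail_cons, add_sub_cancel_right]
    exact Fin.cons_self_tail b
  · intro b _
    simp only [Fin.cons_zero, Fin.tail_cons, sub_add_cancel]
    exact Fin.cons_self_tail b

private lemma latticeBall_rec (m n : ℕ) :
    (latticeBall (m + 1) (n + 1)).card =
      (latticeBall m (n + 1)).card + (latticeBall (m + 1) n).card + (latticeBall m n).card := by
  classical
  set A := latticeBall (m + 1) (n + 1) with hA
  set B := latticeBall (m + 1) n with hB
  have h3 : ((A.filter fun b => ¬ b 0 = 0)).filter (fun b => 0 < b 0) =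
      A.filter fun b => 0 < b 0 := by
    rw [Finset.filter_filter]
    apply Finset.filter_congr
    intro b _
    constructor
    · exact fun h => h.2
    · exact fun h => ⟨by omega, h⟩
  have h4 : ((A.filter fun b => ¬ b 0 = 0)).filter (fun b => ¬ 0 < b 0) =
      A.filter fun b => b 0 < 0 := by
    rw [Finset.filter_filter]
    apply Finset.filter_congr
    intro b _
    constructor
    · rintro ⟨h, h'⟩; omega
    · intro h; exact ⟨by omega, by omega⟩
  have h6 : (B.filter fun b => 0 ≤ b 0) ∪ (B.filter fun b => b 0 ≤ 0) = B := by
    rw [← Finset.filter_or]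
    exact Finset.filter_true_of_mem fun b _ => le_total 0 (b 0)
  have h7 : (B.filter fun b => 0 ≤ b 0) ∩ (B.filter fun b => b 0 ≤ 0) =
      B.filter fun b => b 0 = 0 := by
    rw [← Finset.filter_and]
    apply Finset.filter_congr
    intro b _
    omega
  have h1 : ((A.filter fun b => b 0 = 0)).card + ((A.filter fun b => ¬ b 0 = 0)).card = A.card :=
    by exact Finset.card_filter_add_card_filter_not _
  have h2 : (((A.filter fun b => ¬ b 0 = 0)).filter fun b => 0 < b 0).card +
      (((A.filter fun b => ¬ b 0 = 0)).filter fun b => ¬ 0 < b 0).card =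
      ((A.filter fun b => ¬ b 0 = 0)).card :=
    by exact Finset.card_filter_add_card_filter_not _
  have h5 : ((B.filter fun b => 0 ≤ b 0) ∪ (B.filter fun b => b 0 ≤ 0)).card +
      ((B.filter fun b => 0 ≤ b 0) ∩ (B.filter fun b => b 0 ≤ 0)).card =
      (B.filter fun b => 0 ≤ b 0).card + (B.filter fun b => b 0 ≤ 0).card :=
    Finset.card_union_add_card_inter _ _
  have e1 := card_zero_fiber m (n + 1)
  have e2 := card_zero_fiber m n
  have e3 := card_pos_fiber m n
  have e4 := card_neg_fiber m n
  rw [h3, h4] at h2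
  rw [h6, h7] at h5
  rw [← hA] at e1 e3 e4
  rw [← hB] at e2 e3 e4
  rw [e1] at h1
  rw [e3, e4] at h2
  rw [e2] at h5
  linarith

private lemma latticeBall_card_symm : ∀ m n : ℕ, (latticeBall m n).card = (latticeBall n m).card := by
  intro m
  induction m with
  | zero => intro n; rw [latticeBall_zero_left, latticeBall_zero_right]
  | succ m ihm =>
    intro n
    induction n with
    | zero => rw [latticeBall_zero_left, latticeBall_zero_right]
    | succ n ihn =>
      rw [latticeBall_rec m n, latticeBall_rec n m, ihm (n + 1), ihm n, ihn]
      omega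

theorem lattice_l1_ball_symmetry (m n : ℕ) (hm : 0 < m) (hn : 0 < n) :
    Nat.card {b : Fin m → ℤ // ∑ j, (b j).natAbs ≤ n} =
      Nat.card {b : Fin n → ℤ // ∑ j, (b j).natAbs ≤ m} := by
  rw [natcard_eq_latticeBall, natcard_eq_latticeBall]
  exact latticeBall_card_symm m n
end

section
/- For every non-negative integer k and every real s > 1, k·ζ({s}^k) = Σ_{j=1}^k (−1)^{j+1} ζ(js)·ζ({s}^{k−j}), where ζ({s}^k) = Σ_{n_1>⋯>n_k>0} Π_{j=1}^k n_j^{−s} (with ζ({s}^0) := 1). -/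
open scoped BigOperators

/-- The multiple zeta value `ζ({s}^k)` with `k` identical real arguments `s`. -/
noncomputable def zetaRep (s : ℝ) (k : ℕ) : ℝ :=
  ∑' n : {f : Fin k → ℕ // (∀ i j : Fin k, i < j → f j < f i) ∧ ∀ j, 0 < f j},
    ∏ j : Fin k, (n.1 j : ℝ) ^ (-s)

namespace NewtonAux

open Finset Filter Topology

noncomputable def w (s : ℝ) (n : ℕ) : ℝ := ((n : ℝ) + 1) ^ (-s)

lemma w_nonneg (s : ℝ) (n : ℕ) : 0 ≤ w s n := Real.rpow_nonneg (by positivity) _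

lemma w_pow (s : ℝ) (n : ℕ) (j : ℕ) : w s n ^ j = ((n : ℝ) + 1) ^ (-((j : ℝ) * s)) := by
  rw [w, ← Real.rpow_natCast (((n:ℝ)+1) ^ (-s)) j, ← Real.rpow_mul (by positivity)]
  ring_nf

lemma w_summable {s : ℝ} (hs : 1 < s) : Summable (w s) := by
  have h : Summable (fun n : ℕ => (n : ℝ) ^ (-s)) :=
    Real.summable_nat_rpow.mpr (by linarith)
  have := h.comp_injective (add_left_injective 1)
  refine this.congr fun n => ?_
  simp only [w, Function.comp]
  push_cast
  ring_nf

lemma w_pow_summable {s : ℝ} (hs : 1 < s) {j : ℕ} (hj : 1 ≤ j) :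
    Summable (fun n => w s n ^ j) := by
  have h1 : (1:ℝ) < (j:ℝ) * s := by
    have : (1:ℝ) ≤ (j:ℝ) := by exact_mod_cast hj
    nlinarith
  have := w_summable h1
  exact this.congr fun n => by rw [w_pow, w]

lemma w_pow_hasSum {s : ℝ} (hs : 1 < s) {j : ℕ} (hj : 1 ≤ j) :
    HasSum (fun n => w s n ^ j) (∑' n : ℕ, ((n : ℝ) + 1) ^ (-((j:ℝ) * s))) := by
  have := (w_pow_summable hs hj).hasSum
  rw [tsum_congr (fun n => w_pow s n j)] at this
  exact this

lemma summable_tuple {s : ℝ} (hs : Summable (w s)) (k : ℕ) :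
    Summable (fun g : Fin k → ℕ => ∏ i, w s (g i)) := by
  induction k with
  | zero => simp; exact summable_of_finite_support (Set.toFinite _)
  | succ k ih =>
      have h := (hs.mul_of_nonneg ih (fun n => w_nonneg s n)
        (fun g => Finset.prod_nonneg fun i _ => w_nonneg s _))
      rw [← (Fin.consEquiv (fun _ : Fin (k+1) => ℕ)).summable_iff]
      refine h.congr fun p => ?_
      simp [Fin.consEquiv, Fin.prod_univ_succ]

lemma prod_orderEmbOfFin {k : ℕ} (A : Finset ℕ) (h : A.card = k) (g : ℕ → ℝ) :
    ∏ i : Fin k, g (A.orderEmbOfFin h i) = ∏ a ∈ A, g a := by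
  refine Finset.prod_bij (fun i _ => A.orderEmbOfFin h i) (fun i _ => A.orderEmbOfFin_mem h i)
    (fun i _ j _ hij => (A.orderEmbOfFin h).injective hij) (fun a ha => ?_) (fun _ _ => rfl)
  have : a ∈ Set.range (A.orderEmbOfFin h) := by
    rw [Finset.range_orderEmbOfFin]; exact ha
  obtain ⟨i, hi⟩ := this
  exact ⟨i, mem_univ i, hi⟩

def tupE (k : ℕ) : {A : Finset ℕ // A.card = k} →
    {f : Fin k → ℕ // (∀ i j : Fin k, i < j → f j < f i) ∧ ∀ j, 0 < f j} :=
  fun A => ⟨fun i => A.1.orderEmbOfFin A.2 i.rev + 1,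
    fun i j hij => by
      have : j.rev < i.rev := by rwa [Fin.rev_lt_rev]
      have := (A.1.orderEmbOfFin A.2).strictMono this
      simp only []
      omega,
    fun j => Nat.succ_pos _⟩

lemma tupE_bij (k : ℕ) : Function.Bijective (tupE k) := by
  constructor
  · rintro ⟨A₁, h₁⟩ ⟨A₂, h₂⟩ h
    have h' := congrArg Subtype.val h
    have hemb : ∀ i : Fin k, A₁.orderEmbOfFin h₁ i = A₂.orderEmbOfFin h₂ i := by
      intro i
      have := congrFun h' i.rev
      simpa [tupE, Fin.rev_rev] using this
    have : Set.range (A₁.orderEmbOfFin h₁) = Set.range (A₂.orderEmbOfFin h₂) := by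
      ext a; constructor <;> rintro ⟨i, rfl⟩ <;> exact ⟨i, by rw [hemb]⟩
    rw [Finset.range_orderEmbOfFin, Finset.range_orderEmbOfFin] at this
    exact Subtype.ext (Finset.coe_injective this)
  · rintro ⟨f, hdec, hpos⟩
    set g : Fin k → ℕ := fun i => f i.rev - 1 with hg
    have hmono : StrictMono g := by
      intro i j hij
      have : j.rev < i.rev := by rwa [Fin.rev_lt_rev]
      have h1 := hdec _ _ this
      have h2 := hpos i.rev
      have h3 := hpos j.rev
      simp only [hg]; omega
    have hcard : (Finset.image g univ).card = k := by
      rw [Finset.card_image_of_injective _ hmono.injective, card_univ, Fintype.card_fin]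
    refine ⟨⟨Finset.image g univ, hcard⟩, ?_⟩
    have huniq : g = (Finset.image g univ).orderEmbOfFin hcard :=
      Finset.orderEmbOfFin_unique hcard (fun x => Finset.mem_image_of_mem g (mem_univ x)) hmono
    apply Subtype.ext
    funext i
    show (Finset.image g univ).orderEmbOfFin hcard i.rev + 1 = f i
    rw [← congrFun huniq i.rev]
    have := hpos i
    simp only [hg, Fin.rev_rev]
    omega

lemma zetaRep_eq (s : ℝ) (k : ℕ) :
    zetaRep s k = ∑' A : {A : Finset ℕ // A.card = k}, ∏ a ∈ A.1, w s a := by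
  rw [zetaRep, ← (Equiv.ofBijective (tupE k) (tupE_bij k)).tsum_eq]
  refine tsum_congr fun A => ?_
  show (∏ j : Fin k, ((A.1.orderEmbOfFin A.2 j.rev + 1 : ℕ) : ℝ) ^ (-s)) = _
  have step1 : ∀ j : Fin k, ((A.1.orderEmbOfFin A.2 j.rev + 1 : ℕ) : ℝ) ^ (-s)
      = w s (A.1.orderEmbOfFin A.2 j.rev) := by
    intro j; rw [w]; push_cast; ring_nf
  rw [Finset.prod_congr rfl (fun j _ => step1 j)]
  exact (Fintype.prod_equiv Fin.revPerm (fun j => w s (A.1.orderEmbOfFin A.2 j.rev))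
    (fun j => w s (A.1.orderEmbOfFin A.2 j)) (fun j => rfl)).trans
    (prod_orderEmbOfFin A.1 A.2 (w s))

lemma summable_finsets {s : ℝ} (hs : Summable (w s)) (k : ℕ) :
    Summable (fun A : {A : Finset ℕ // A.card = k} => ∏ a ∈ A.1, w s a) := by
  have hι : Function.Injective
      (fun (A : {A : Finset ℕ // A.card = k}) (i : Fin k) => A.1.orderEmbOfFin A.2 i) := by
    rintro ⟨A₁, h₁⟩ ⟨A₂, h₂⟩ h
    have hemb : ∀ i : Fin k, A₁.orderEmbOfFin h₁ i = A₂.orderEmbOfFin h₂ i :=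
      fun i => congrFun h i
    have : Set.range (A₁.orderEmbOfFin h₁) = Set.range (A₂.orderEmbOfFin h₂) := by
      ext a; constructor <;> rintro ⟨i, rfl⟩
      exacts [⟨i, (hemb i).symm⟩, ⟨i, hemb i⟩]
    rw [Finset.range_orderEmbOfFin, Finset.range_orderEmbOfFin] at this
    exact Subtype.ext (Finset.coe_injective this)
  have := (summable_tuple hs k).comp_injective hι
  refine this.congr fun A => ?_
  exact prod_orderEmbOfFin A.1 A.2 (w s)

noncomputable def Epart (s : ℝ) (N m : ℕ) : ℝ :=
  ∑ A ∈ (Finset.range N).powersetCard m, ∏ a ∈ A, w s a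

noncomputable def Ppart (s : ℝ) (N j : ℕ) : ℝ := ∑ i ∈ Finset.range N, w s i ^ j

lemma tendsto_Epart {s : ℝ} (hs : Summable (w s)) (m : ℕ) :
    Tendsto (fun N => Epart s N m) atTop (𝓝 (zetaRep s m)) := by
  rw [zetaRep_eq]
  have hSum := (summable_finsets hs m).hasSum
  set T : ℕ → Finset {A : Finset ℕ // A.card = m} :=
    fun N => ((Finset.range N).powersetCard m).subtype (fun A => A.card = m) with hT
  have hmono : Monotone T := by
    intro N M h A hA
    simp only [hT, Finset.mem_subtype] at *
    exact Finset.powersetCard_mono (Finset.range_subset_range.mpr h) hA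
  have hexh : ∀ A, ∃ N, A ∈ T N := by
    intro A
    obtain ⟨N, hN⟩ := A.1.exists_nat_subset_range
    exact ⟨N, by simp only [hT, Finset.mem_subtype, Finset.mem_powersetCard]; exact ⟨hN, A.2⟩⟩
  have htend := tendsto_atTop_finset_of_monotone hmono hexh
  have := hSum.comp htend
  refine this.congr fun N => ?_
  show ∑ A ∈ T N, ∏ a ∈ A.1, w s a = Epart s N m
  rw [Epart, ← Finset.filter_true_of_mem
    (fun A hA => (Finset.mem_powersetCard.mp hA).2), ← Finset.subtype_map, Finset.sum_map]
  rfl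

lemma eval_esymm (s : ℝ) (N m : ℕ) :
    MvPolynomial.eval (fun i : Fin N => w s i) (MvPolynomial.esymm (Fin N) ℝ m)
      = Epart s N m := by
  rw [MvPolynomial.esymm, Epart]
  rw [show Finset.range N = (Finset.univ : Finset (Fin N)).map Fin.valEmbedding by
    rw [Fin.map_valEmbedding_univ, Nat.Iio_eq_range]]
  rw [Finset.powersetCard_map, Finset.sum_map, map_sum]
  refine Finset.sum_congr rfl fun t _ => ?_
  rw [map_prod]
  rw [show (Finset.mapEmbedding Fin.valEmbedding).toEmbedding t = t.map Fin.valEmbedding from rfl]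
  rw [Finset.prod_map]
  simp [MvPolynomial.eval_X]

lemma eval_psum (s : ℝ) (N j : ℕ) :
    MvPolynomial.eval (fun i : Fin N => w s i) (MvPolynomial.psum (Fin N) ℝ j)
      = Ppart s N j := by
  rw [MvPolynomial.psum, Ppart, map_sum, Finset.sum_range fun i => w s i ^ j]
  refine Finset.sum_congr rfl fun i _ => ?_
  simp

lemma neg_one_sign {k j : ℕ} (hj : j ≤ k) :
    (-1 : ℝ) ^ (k + 1) * (-1) ^ (k - j) = (-1) ^ (j + 1) := by
  rw [← pow_add, show k + 1 + (k - j) = (j + 1) + 2 * (k - j) by omega, pow_add, pow_mul,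
    neg_one_sq, one_pow, mul_one]

lemma finite_newton (s : ℝ) (N k : ℕ) :
    (k : ℝ) * Epart s N k =
      ∑ j ∈ Finset.Icc 1 k, (-1 : ℝ) ^ (j + 1) * Ppart s N j * Epart s N (k - j) := by
  have H := congrArg (MvPolynomial.eval (fun i : Fin N => w s i))
    (MvPolynomial.mul_esymm_eq_sum (Fin N) ℝ k)
  rw [map_mul, map_natCast, eval_esymm, map_mul, map_pow, map_neg, map_one, map_sum] at H
  rw [H, Finset.mul_sum]
  refine Finset.sum_nbij' (fun a => a.2) (fun j => (k - j, j)) ?_ ?_ ?_ ?_ ?_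
  · intro a ha
    simp only [Finset.mem_filter, Finset.HasAntidiagonal.mem_antidiagonal] at ha
    simp only [Finset.mem_Icc]; omega
  · intro j hj
    simp only [Finset.mem_Icc] at hj
    simp only [Finset.mem_filter, Finset.HasAntidiagonal.mem_antidiagonal]; omega
  · intro a ha
    simp only [Finset.mem_filter, Finset.HasAntidiagonal.mem_antidiagonal] at ha
    show (k - a.2, a.2) = a
    rw [show k - a.2 = a.1 by omega]
  · intro j hj; rfl
  · intro a ha
    simp only [Finset.mem_filter, Finset.HasAntidiagonal.mem_antidiagonal] at ha
    rw [map_mul, map_mul, map_pow, map_neg, map_one, eval_esymm, eval_psum]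
    have h1 : a.1 = k - a.2 := by omega
    have h2 : a.2 ≤ k := by omega
    rw [h1]
    rw [show (-1:ℝ)^(k+1) * ((-1)^(k - a.2) * Epart s N (k - a.2) * Ppart s N a.2)
        = ((-1:ℝ)^(k+1) * (-1)^(k - a.2)) * Ppart s N a.2 * Epart s N (k - a.2) by ring,
      neg_one_sign h2]

end NewtonAux

theorem newton_recurrence (k : ℕ) (s : ℝ) (hs : 1 < s) :
    (k : ℝ) * zetaRep s k =
      ∑ j ∈ Finset.Icc 1 k, (-1 : ℝ) ^ (j + 1) * rzeta (j * s) * zetaRep s (k - j) := by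
  open NewtonAux Filter Topology in
  have hsw : Summable (w s) := w_summable hs
  have hE : ∀ m, Tendsto (fun N => Epart s N m) atTop (𝓝 (zetaRep s m)) :=
    fun m => tendsto_Epart hsw m
  have hP : ∀ j : ℕ, 1 ≤ j →
      Tendsto (fun N => Ppart s N j) atTop (𝓝 (rzeta (j * s))) := by
    intro j hj
    exact (w_pow_hasSum hs hj).tendsto_sum_nat
  have h1 : Tendsto (fun N => (k : ℝ) * Epart s N k) atTop (𝓝 ((k : ℝ) * zetaRep s k)) :=
    (hE k).const_mul _
  have h2 : Tendsto
      (fun N => ∑ j ∈ Finset.Icc 1 k, (-1 : ℝ) ^ (j + 1) * Ppart s N j * Epart s N (k - j))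
      atTop (𝓝 (∑ j ∈ Finset.Icc 1 k, (-1 : ℝ) ^ (j + 1) * rzeta (j * s) * zetaRep s (k - j))) := by
    refine tendsto_finset_sum _ fun j hj => ?_
    exact (((hP j (Finset.mem_Icc.mp hj).1).const_mul _).mul (hE (k - j)))
  exact tendsto_nhds_unique (h1.congr fun N => finite_newton s N k) h2
end

section
/- For every non-negative integer n, ζ({4}^n) = 2·4^n·π^{4n}/(4n+2)!, where ζ({4}^n) = Σ_{n_1>⋯>n_n>0} Π_{j=1}^n n_j^{−4}. -/
open scoped BigOperators Real ENNReal NNReal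

/-- The multiple zeta value `ζ({4}^n)` of depth `n` with all arguments equal to `4`. -/
noncomputable def zetaFourRep (n : ℕ) : ℝ :=
  ∑' f : {f : Fin n → ℕ // (∀ i j : Fin n, i < j → f j < f i) ∧ ∀ j, 0 < f j},
    ∏ j : Fin n, (1 / (f.1 j : ℝ) ^ 4)

namespace ZetaFourAux

/-- The equivalence between `n`-element subsets of `ℕ` and strictly decreasing positive
`n`-tuples, via `s ↦ (j ↦ orderEmbOfFin s (rev j) + 1)`. -/
noncomputable def setTupleEquiv (n : ℕ) :
    {s : Finset ℕ // s.card = n} ≃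
      {f : Fin n → ℕ // (∀ i j : Fin n, i < j → f j < f i) ∧ ∀ j, 0 < f j} where
  toFun s := ⟨fun j => s.1.orderEmbOfFin s.2 j.rev + 1,
    ⟨fun i j hij => by
      have h : (j.rev : Fin n) < i.rev := Fin.rev_lt_rev.mpr hij
      exact Nat.add_lt_add_right ((s.1.orderEmbOfFin s.2).strictMono h) 1,
     fun j => Nat.succ_pos _⟩⟩
  invFun f := ⟨Finset.image (fun j => f.1 j - 1) Finset.univ, by
    have hinj : Function.Injective (fun j => f.1 j - 1) := by
      intro i j hij
      by_contra hne
      rcases lt_or_gt_of_ne hne with h | h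
      · have := f.2.1 i j h
        have hj := f.2.2 j
        simp only at hij
        omega
      · have := f.2.1 j i h
        have hi := f.2.2 i
        simp only at hij
        omega
    rw [Finset.card_image_of_injective _ hinj, Finset.card_univ, Fintype.card_fin]⟩
  left_inv s := by
    ext k
    simp only [Finset.mem_image, Finset.mem_univ, true_and, Nat.add_sub_cancel]
    constructor
    · rintro ⟨j, rfl⟩
      exact Finset.orderEmbOfFin_mem _ _ _
    · intro hk
      have hk' : k ∈ Set.range (s.1.orderEmbOfFin s.2) := by
        rw [Finset.range_orderEmbOfFin]; exact hk
      obtain ⟨j, hj⟩ := hk'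
      exact ⟨j.rev, by simp [hj]⟩
  right_inv f := by
    have hpos := f.2.2
    have hdec := f.2.1
    set g : Fin n → ℕ := fun j => f.1 j.rev - 1 with hg
    have hmono : StrictMono g := by
      intro i j hij
      have h : (j.rev : Fin n) < i.rev := Fin.rev_lt_rev.mpr hij
      have := hdec _ _ h
      have := hpos i.rev
      have := hpos j.rev
      simp only [hg]
      omega
    have hcard : (Finset.image (fun j => f.1 j - 1) Finset.univ).card = n := by
      have hinj : Function.Injective (fun j => f.1 j - 1) := by
        intro i j hij
        by_contra hne
        rcases lt_or_gt_of_ne hne with h | h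
        · have := hdec i j h; have := hpos j; simp only at hij; omega
        · have := hdec j i h; have := hpos i; simp only at hij; omega
      rw [Finset.card_image_of_injective _ hinj, Finset.card_univ, Fintype.card_fin]
    have hmem : ∀ x, g x ∈ Finset.image (fun j => f.1 j - 1) Finset.univ := by
      intro x
      exact Finset.mem_image.mpr ⟨x.rev, Finset.mem_univ _, rfl⟩
    have huniq := Finset.orderEmbOfFin_unique hcard hmem hmono
    apply Subtype.ext
    funext j
    have := congrFun huniq j.rev
    simp only [hg] at this
    have hj := hpos j
    simp only [Fin.rev_rev] at this
    show (Finset.image (fun j => f.1 j - 1) Finset.univ).orderEmbOfFin hcard j.rev + 1 = f.1 j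
    omega

end ZetaFourAux

namespace ZetaFourAux

noncomputable def En (n : ℕ) : ℝ≥0∞ :=
  ∑' s : {s : Finset ℕ // s.card = n}, ∏ k ∈ s.1, (((k : ℝ≥0∞) + 1) ^ 4)⁻¹

lemma prod_over_set {M : Type*} [CommMonoid M] (n : ℕ) (s : {s : Finset ℕ // s.card = n}) (f : ℕ → M) :
    ∏ j : Fin n, f (s.1.orderEmbOfFin s.2 j.rev) = ∏ k ∈ s.1, f k := by
  have hrev : ∏ j : Fin n, f (s.1.orderEmbOfFin s.2 j.rev) =
      ∏ j : Fin n, f (s.1.orderEmbOfFin s.2 j) :=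
    Equiv.prod_comp Fin.revPerm (fun j : Fin n => f (s.1.orderEmbOfFin s.2 j))
  rw [hrev]
  exact Finset.prod_bij (fun j _ => s.1.orderEmbOfFin s.2 j)
    (fun j _ => Finset.orderEmbOfFin_mem _ _ _)
    (fun a _ b _ h => (s.1.orderEmbOfFin s.2).injective h)
    (fun k hk => by
      have hk' : k ∈ Set.range (s.1.orderEmbOfFin s.2) := by
        rw [Finset.range_orderEmbOfFin]; exact hk
      obtain ⟨j, hj⟩ := hk'
      exact ⟨j, Finset.mem_univ _, hj⟩)
    (fun j _ => rfl)

lemma En_term_ne_top (s : Finset ℕ) : (∏ k ∈ s, (((k : ℝ≥0∞) + 1) ^ 4)⁻¹) ≠ ∞ := by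
  refine (ENNReal.prod_lt_top fun k _ => ?_).ne
  have : (0 : ℝ≥0∞) < ((k : ℝ≥0∞) + 1) ^ 4 :=
    ENNReal.pow_pos (lt_of_lt_of_le zero_lt_one le_add_self) 4
  exact ENNReal.inv_lt_top.mpr this

lemma En_term_toReal (s : Finset ℕ) :
    (∏ k ∈ s, (((k : ℝ≥0∞) + 1) ^ 4)⁻¹).toReal = ∏ k ∈ s, 1 / ((k : ℝ) + 1) ^ 4 := by
  rw [ENNReal.toReal_prod]
  refine Finset.prod_congr rfl fun k _ => ?_
  rw [ENNReal.toReal_inv, ENNReal.toReal_pow, one_div,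
    ENNReal.toReal_add (by simp) (by simp)]
  simp

lemma zeta_eq_toReal_En (n : ℕ) : zetaFourRep n = (En n).toReal := by
  rw [En, ENNReal.tsum_toReal_eq
      (f := fun s : {s : Finset ℕ // s.card = n} => ∏ k ∈ s.1, (((k : ℝ≥0∞) + 1) ^ 4)⁻¹)
      (fun s => En_term_ne_top s.1), zetaFourRep,
    ← Equiv.tsum_eq (setTupleEquiv n)]
  refine tsum_congr fun s => ?_
  rw [En_term_toReal, ← prod_over_set n s (fun k => 1 / ((k : ℝ) + 1) ^ 4)]
  refine Finset.prod_congr rfl fun j _ => ?_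
  simp only [setTupleEquiv, Equiv.coe_fn_mk]
  push_cast
  ring

lemma tsum_finsets_eq_iSup (x : ℝ≥0∞) :
    ∑' s : Finset ℕ, ∏ k ∈ s, (x * (((k : ℝ≥0∞) + 1) ^ 4)⁻¹) =
      ⨆ N, ∏ k ∈ Finset.range N, (1 + x * (((k : ℝ≥0∞) + 1) ^ 4)⁻¹) := by
  rw [ENNReal.tsum_eq_iSup_sum' (fun N => (Finset.range N).powerset) ?_]
  · refine iSup_congr fun N => ?_
    have h : ∏ k ∈ Finset.range N, (1 + x * (((k : ℝ≥0∞) + 1) ^ 4)⁻¹) =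
        ∑ s ∈ (Finset.range N).powerset, ∏ k ∈ s, (x * (((k : ℝ≥0∞) + 1) ^ 4)⁻¹) := by
      refine (Finset.prod_congr rfl fun k _ => add_comm _ _).trans ?_
      rw [Finset.prod_add]
      simp
    rw [h]
  · intro t
    refine ⟨(t.sup fun s => s.sup id) + 1, fun s hs => ?_⟩
    rw [Finset.mem_powerset]
    intro k hk
    rw [Finset.mem_range]
    have h1 : k ≤ s.sup id := Finset.le_sup (f := id) hk
    have h2 : s.sup id ≤ t.sup fun s => s.sup id := Finset.le_sup (f := fun s => s.sup id) hs
    omega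

lemma tsum_finsets_eq_tsum_En (x : ℝ≥0∞) :
    ∑' s : Finset ℕ, ∏ k ∈ s, (x * (((k : ℝ≥0∞) + 1) ^ 4)⁻¹) =
      ∑' n, x ^ n * En n := by
  rw [← Equiv.tsum_eq (Equiv.sigmaFiberEquiv (Finset.card : Finset ℕ → ℕ))
      (fun s => ∏ k ∈ s, (x * (((k : ℝ≥0∞) + 1) ^ 4)⁻¹)),
    ENNReal.tsum_sigma']
  refine tsum_congr fun n => ?_
  rw [En, ← ENNReal.tsum_mul_left]
  refine tsum_congr fun s => ?_
  simp only [Equiv.sigmaFiberEquiv, Equiv.coe_fn_mk]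
  rw [Finset.prod_mul_distrib, Finset.prod_const, s.2]

lemma ofReal_partial_prod (t : ℝ) (N : ℕ) :
    ENNReal.ofReal (∏ k ∈ Finset.range N, (1 + t ^ 4 / ((k : ℝ) + 1) ^ 4)) =
      ∏ k ∈ Finset.range N, (1 + ENNReal.ofReal (t ^ 4) * (((k : ℝ≥0∞) + 1) ^ 4)⁻¹) := by
  induction N with
  | zero => simp
  | succ N ih =>
    rw [Finset.prod_range_succ, Finset.prod_range_succ,
      ENNReal.ofReal_mul (Finset.prod_nonneg fun k _ => by positivity), ih]
    congr 1
    rw [ENNReal.ofReal_add zero_le_one (by positivity), ENNReal.ofReal_one]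
    congr 1
    rw [div_eq_mul_inv, ENNReal.ofReal_mul (by positivity),
      ENNReal.ofReal_inv_of_pos (by positivity)]
    congr 2
    rw [ENNReal.ofReal_pow (by positivity)]
    congr 1
    rw [ENNReal.ofReal_add (by positivity) zero_le_one, ENNReal.ofReal_one,
      ENNReal.ofReal_natCast]

lemma hasSum_zeta_pow (t : ℝ) {L : ℝ}
    (hL : Filter.Tendsto (fun N => ∏ k ∈ Finset.range N, (1 + t ^ 4 / ((k : ℝ) + 1) ^ 4))
      Filter.atTop (nhds L)) :
    HasSum (fun n => zetaFourRep n * (t ^ 4) ^ n) L := by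
  set x := ENNReal.ofReal (t ^ 4) with hx
  have hmono : Monotone (fun N => ∏ k ∈ Finset.range N, (1 + x * (((k : ℝ≥0∞) + 1) ^ 4)⁻¹)) := by
    intro M N h
    exact Finset.prod_le_prod_of_subset_of_one_le' (Finset.range_subset_range.mpr h)
      (fun k _ _ => le_self_add)
  have htendE : Filter.Tendsto (fun N => ∏ k ∈ Finset.range N, (1 + x * (((k : ℝ≥0∞) + 1) ^ 4)⁻¹))
      Filter.atTop (nhds (ENNReal.ofReal L)) := by
    have h := (ENNReal.continuous_ofReal.tendsto L).comp hL
    exact h.congr fun N => ofReal_partial_prod t N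
  have hsup : (⨆ N, ∏ k ∈ Finset.range N, (1 + x * (((k : ℝ≥0∞) + 1) ^ 4)⁻¹)) =
      ENNReal.ofReal L := tendsto_nhds_unique (tendsto_atTop_iSup hmono) htendE
  have key : ∑' n, x ^ n * En n = ENNReal.ofReal L := by
    rw [← tsum_finsets_eq_tsum_En, tsum_finsets_eq_iSup, hsup]
  have hfin : ∑' n, x ^ n * En n ≠ ⊤ := by rw [key]; exact ENNReal.ofReal_ne_top
  have hne : ∀ n, x ^ n * En n ≠ ⊤ := fun n => ne_top_of_le_ne_top hfin (ENNReal.le_tsum n)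
  have hterm : ∀ n, ((x ^ n * En n).toReal) = zetaFourRep n * (t ^ 4) ^ n := by
    intro n
    rw [ENNReal.toReal_mul, ENNReal.toReal_pow, ENNReal.toReal_ofReal (by positivity),
      zeta_eq_toReal_En, mul_comm]
  have hLnonneg : 0 ≤ L := by
    refine ge_of_tendsto' hL fun N => Finset.prod_nonneg fun k _ => by positivity
  have htsum : ∑' n, zetaFourRep n * (t ^ 4) ^ n = L := by
    calc ∑' n, zetaFourRep n * (t ^ 4) ^ n = ∑' n, ((x ^ n * En n).toReal) :=
          tsum_congr fun n => (hterm n).symm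
      _ = (∑' n, x ^ n * En n).toReal := (ENNReal.tsum_toReal_eq hne).symm
      _ = L := by rw [key, ENNReal.toReal_ofReal hLnonneg]
  have hsum : Summable (fun n => zetaFourRep n * (t ^ 4) ^ n) :=
    (ENNReal.summable_toReal hfin).congr fun n => hterm n
  exact htsum ▸ hsum.hasSum


lemma factor_aux (z w c : ℂ) (t : ℝ) (hz2 : z^2 + w^2 = 0) (hzw : z*w = (t:ℂ)^2) :
    (1 - z^2/c^2) * (1 - w^2/c^2) = 1 + (t:ℂ)^4/c^4 := by
  linear_combination (-(1:ℂ)/c^2) * hz2 + ((z*w + (t:ℂ)^2)/c^4) * hzw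

lemma tendsto_partial_prod {t : ℝ} (ht : t ≠ 0) :
    Filter.Tendsto (fun N => ∏ k ∈ Finset.range N, (1 + t ^ 4 / ((k : ℝ) + 1) ^ 4)) Filter.atTop
      (nhds ((Real.cosh (Real.sqrt 2 * π * t) - Real.cos (Real.sqrt 2 * π * t)) /
        (2 * π ^ 2 * t ^ 2))) := by
  have hs0 : Real.sqrt 2 ≠ 0 := by positivity
  have s2 : (Real.sqrt 2 : ℂ) ≠ 0 := Complex.ofReal_ne_zero.mpr hs0
  have s2sq : (Real.sqrt 2 : ℂ) ^ 2 = 2 := by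
    rw [← Complex.ofReal_pow, Real.sq_sqrt (by norm_num : (0:ℝ) ≤ 2)]
    norm_num
  set z : ℂ := (t : ℂ) * (1 + Complex.I) / (Real.sqrt 2 : ℂ) with hz
  set w : ℂ := (t : ℂ) * (1 - Complex.I) / (Real.sqrt 2 : ℂ) with hw
  have hz2 : z ^ 2 + w ^ 2 = 0 := by
    rw [hz, hw]
    field_simp
    linear_combination (2 * (t:ℂ)^2) * Complex.I_sq
  have hzw : z * w = (t : ℂ) ^ 2 := by
    rw [hz, hw]
    field_simp
    linear_combination (-(t:ℂ)^2) * s2sq + (-(t:ℂ)^2) * Complex.I_sq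
  have hzpw : z + w = (Real.sqrt 2 : ℂ) * (t : ℂ) := by
    rw [hz, hw]
    field_simp
    linear_combination (-(t:ℂ)) * s2sq
  have hzmw : z - w = (Real.sqrt 2 : ℂ) * (t : ℂ) * Complex.I := by
    rw [hz, hw]
    field_simp
    linear_combination (-(t:ℂ)*Complex.I) * s2sq
  have hprod : ∀ N : ℕ,
      ((π:ℂ) * z * ∏ j ∈ Finset.range N, (1 - z^2 / ((j:ℂ)+1)^2)) *
        ((π:ℂ) * w * ∏ j ∈ Finset.range N, (1 - w^2 / ((j:ℂ)+1)^2)) =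
      (π:ℂ)^2 * (t:ℂ)^2 *
        ((∏ k ∈ Finset.range N, (1 + t^4 / ((k:ℝ)+1)^4) : ℝ) : ℂ) := by
    intro N
    rw [Complex.ofReal_prod]
    calc ((π:ℂ) * z * ∏ j ∈ Finset.range N, (1 - z^2/((j:ℂ)+1)^2)) *
          ((π:ℂ) * w * ∏ j ∈ Finset.range N, (1 - w^2/((j:ℂ)+1)^2))
        = (π:ℂ)^2 * (z*w) * ∏ j ∈ Finset.range N,
            ((1 - z^2/((j:ℂ)+1)^2) * (1 - w^2/((j:ℂ)+1)^2)) := by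
          rw [Finset.prod_mul_distrib]; ring
      _ = _ := by
          rw [hzw]
          congr 1
          refine Finset.prod_congr rfl fun j _ => ?_
          rw [factor_aux z w ((j:ℂ)+1) t hz2 hzw]
          push_cast
          ring
  have hmul := (Complex.tendsto_euler_sin_prod z).mul (Complex.tendsto_euler_sin_prod w)
  set u : ℝ := Real.sqrt 2 * π * t with hu
  have hS : Complex.sin ((π:ℂ) * z) * Complex.sin ((π:ℂ) * w)
      = (((Real.cosh u - Real.cos u) / 2 : ℝ) : ℂ) := by
    have h := Complex.cos_sub_cos ((π:ℂ)*z - (π:ℂ)*w) ((π:ℂ)*z + (π:ℂ)*w)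
    rw [show ((π:ℂ)*z - (π:ℂ)*w + ((π:ℂ)*z + (π:ℂ)*w))/2 = (π:ℂ)*z by ring,
        show ((π:ℂ)*z - (π:ℂ)*w - ((π:ℂ)*z + (π:ℂ)*w))/2 = -((π:ℂ)*w) by ring,
        Complex.sin_neg] at h
    have hA : Complex.cos ((π:ℂ)*z - (π:ℂ)*w) = ((Real.cosh u : ℝ) : ℂ) := by
      rw [show (π:ℂ)*z - (π:ℂ)*w = (π:ℂ)*(z-w) by ring, hzmw,
        show (π:ℂ)*((Real.sqrt 2:ℂ)*(t:ℂ)*Complex.I) = ((u:ℝ):ℂ) * Complex.I by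
          rw [hu]; push_cast; ring,
        Complex.cos_mul_I, Complex.ofReal_cosh]
    have hB : Complex.cos ((π:ℂ)*z + (π:ℂ)*w) = ((Real.cos u : ℝ) : ℂ) := by
      rw [show (π:ℂ)*z + (π:ℂ)*w = (π:ℂ)*(z+w) by ring, hzpw,
        show (π:ℂ)*((Real.sqrt 2:ℂ)*(t:ℂ)) = ((u:ℝ):ℂ) by rw [hu]; push_cast; ring,
        ← Complex.ofReal_cos]
    rw [hA, hB] at h
    push_cast at h ⊢
    linear_combination (-1/2 : ℂ) * h
  have hπt : ((π:ℂ)^2 * (t:ℂ)^2) ≠ 0 := by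
    have h1 : (π:ℂ) ≠ 0 := Complex.ofReal_ne_zero.mpr Real.pi_ne_zero
    have h2 : (t:ℂ) ≠ 0 := Complex.ofReal_ne_zero.mpr ht
    exact mul_ne_zero (pow_ne_zero 2 h1) (pow_ne_zero 2 h2)
  have hmul2 := hmul.const_mul (((π:ℂ)^2 * (t:ℂ)^2)⁻¹)
  have hre := (Complex.continuous_re.tendsto _).comp hmul2
  have hfun : ∀ N, ((((π:ℂ)^2*(t:ℂ)^2)⁻¹ *
      (((π:ℂ) * z * ∏ j ∈ Finset.range N, (1 - z^2/((j:ℂ)+1)^2)) *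
        ((π:ℂ) * w * ∏ j ∈ Finset.range N, (1 - w^2/((j:ℂ)+1)^2)))).re)
      = ∏ k ∈ Finset.range N, (1 + t^4/((k:ℝ)+1)^4) := by
    intro N
    rw [hprod N, inv_mul_cancel_left₀ hπt, Complex.ofReal_re]
  have hval : ((((π:ℂ)^2*(t:ℂ)^2)⁻¹ *
      (Complex.sin ((π:ℂ)*z) * Complex.sin ((π:ℂ)*w))).re)
      = (Real.cosh u - Real.cos u) / (2 * π^2 * t^2) := by
    rw [hS, show ((π:ℂ)^2*(t:ℂ)^2) = ((π^2*t^2 : ℝ) : ℂ) by push_cast; ring,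
      ← Complex.ofReal_inv, ← Complex.ofReal_mul, Complex.ofReal_re]
    ring
  have hfinal := hre.congr hfun
  rwa [hval] at hfinal


lemma hasSum_target {t : ℝ} (ht : t ≠ 0) :
    HasSum (fun n => (2 * 4 ^ n * π ^ (4 * n) / (Nat.factorial (4 * n + 2)) : ℝ) * (t ^ 4) ^ n)
      ((Real.cosh (Real.sqrt 2 * π * t) - Real.cos (Real.sqrt 2 * π * t)) /
        (2 * π ^ 2 * t ^ 2)) := by
  set u := Real.sqrt 2 * π * t with hu
  have hsub := (Real.hasSum_cosh u).sub (Real.hasSum_cos u)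
  have hinj : Function.Injective (fun n : ℕ => 2 * n + 1) := fun c d h => by simp only at h; omega
  have hvan : ∀ m, m ∉ Set.range (fun n : ℕ => 2 * n + 1) →
      (u ^ (2*m) / (Nat.factorial (2*m)) - (-1) ^ m * u ^ (2*m) / (Nat.factorial (2*m)) : ℝ)
        = 0 := by
    intro m hm
    have hev : Even m := by
      rcases Nat.even_or_odd m with h | h
      · exact h
      · obtain ⟨k, hk⟩ := h
        exact absurd ⟨k, show 2*k+1 = m by omega⟩ hm
    rw [hev.neg_one_pow, one_mul, sub_self]
  have hodd := (hinj.hasSum_iff hvan).mpr hsub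
  have hdiv := hodd.div_const (2 * π ^ 2 * t ^ 2)
  have heq : (fun n : ℕ =>
      (2 * 4 ^ n * π ^ (4 * n) / (Nat.factorial (4 * n + 2)) : ℝ) * (t ^ 4) ^ n) = fun n =>
      (u ^ (2*(2*n+1)) / (Nat.factorial (2*(2*n+1))) -
        (-1) ^ (2*n+1) * u ^ (2*(2*n+1)) / (Nat.factorial (2*(2*n+1)))) / (2 * π ^ 2 * t ^ 2) := by
    funext n
    have hodd1 : (-1:ℝ) ^ (2*n+1) = -1 := Odd.neg_one_pow ⟨n, by ring⟩
    have h1 : (Real.sqrt 2) ^ (2*(2*n+1)) = 2 ^ (2*n+1) := by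
      rw [pow_mul, Real.sq_sqrt (by norm_num : (0:ℝ) ≤ 2)]
    have h4 : (4:ℝ) ^ n = 2 ^ (2*n) := by rw [show (4:ℝ) = 2^2 by norm_num, ← pow_mul]
    have hfac : ((2*(2*n+1)).factorial : ℝ) ≠ 0 := Nat.cast_ne_zero.mpr (Nat.factorial_ne_zero _)
    rw [hodd1, hu, mul_pow, mul_pow, h1, h4, show 4*n+2 = 2*(2*n+1) by ring]
    have hπ : π ≠ 0 := Real.pi_ne_zero
    field_simp
    ring
  exact heq ▸ hdiv

lemma coeff_unique {a b : ℕ → ℝ} (ha0 : ∀ n, 0 ≤ a n) (hb0 : ∀ n, 0 ≤ b n)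
    (hsa : Summable a) (hsb : Summable b)
    (heq : ∀ y : ℝ, 0 < y → y ≤ 1 → ∑' n, a n * y ^ n = ∑' n, b n * y ^ n) :
    a = b := by
  have hsy : ∀ (c : ℕ → ℝ), (∀ k, 0 ≤ c k) → Summable c → ∀ y : ℝ, 0 ≤ y → y ≤ 1 →
      ∀ m : ℕ, Summable (fun k => c (k + m) * y ^ k) := by
    intro c hc0 hc y hy0 hy1 m
    refine Summable.of_nonneg_of_le (fun k => mul_nonneg (hc0 _) (pow_nonneg hy0 _)) (fun k => ?_)
      ((summable_nat_add_iff m).mpr hc)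
    calc c (k+m) * y ^ k ≤ c (k+m) * 1 :=
          mul_le_mul_of_nonneg_left (pow_le_one₀ hy0 hy1) (hc0 _)
      _ = c (k+m) := mul_one _
  funext n
  induction n using Nat.strong_induction_on with
  | _ n ih =>
  set Ca := ∑' k, a (k + (n+1)) with hCa
  set Cb := ∑' k, b (k + (n+1)) with hCb
  have hsa' : Summable (fun k => a (k + (n+1))) := (summable_nat_add_iff _).mpr hsa
  have hsb' : Summable (fun k => b (k + (n+1))) := (summable_nat_add_iff _).mpr hsb
  have hCa0 : 0 ≤ Ca := tsum_nonneg fun k => ha0 _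
  have hCb0 : 0 ≤ Cb := tsum_nonneg fun k => hb0 _
  have key : ∀ y : ℝ, 0 < y → y ≤ 1 → |a n - b n| ≤ y * (Ca + Cb) := by
    intro y hy0 hy1
    have h := heq y hy0 hy1
    have ha' : Summable (fun k => a k * y ^ k) := by
      simpa using hsy a ha0 hsa y hy0.le hy1 0
    have hb' : Summable (fun k => b k * y ^ k) := by
      simpa using hsy b hb0 hsb y hy0.le hy1 0
    have hsplit_a := Summable.sum_add_tsum_nat_add (f := fun k => a k * y ^ k) n ha'
    have hsplit_b := Summable.sum_add_tsum_nat_add (f := fun k => b k * y ^ k) n hb'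
    have hheads : ∑ i ∈ Finset.range n, a i * y ^ i = ∑ i ∈ Finset.range n, b i * y ^ i :=
      Finset.sum_congr rfl fun i hi => by rw [ih i (Finset.mem_range.mp hi)]
    have htails : ∑' k, a (k + n) * y ^ (k + n) = ∑' k, b (k + n) * y ^ (k + n) := by
      linarith [hsplit_a, hsplit_b, h, hheads]
    have hfa : ∀ k : ℕ, a (k + n) * y ^ (k + n) = (a (k + n) * y ^ k) * y ^ n := fun k => by
      rw [pow_add]; ring
    have hfb : ∀ k : ℕ, b (k + n) * y ^ (k + n) = (b (k + n) * y ^ k) * y ^ n := fun k => by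
      rw [pow_add]; ring
    rw [tsum_congr hfa, tsum_congr hfb, tsum_mul_right, tsum_mul_right] at htails
    have hyn : (y:ℝ) ^ n ≠ 0 := pow_ne_zero n hy0.ne'
    have hAB : ∑' k, a (k + n) * y ^ k = ∑' k, b (k + n) * y ^ k :=
      mul_right_cancel₀ hyn htails
    have hA := Summable.tsum_eq_zero_add (hsy a ha0 hsa y hy0.le hy1 n)
    have hB := Summable.tsum_eq_zero_add (hsy b hb0 hsb y hy0.le hy1 n)
    have hshift_a : ∑' k, a (k + 1 + n) * y ^ (k+1) = y * ∑' k, a (k + (n+1)) * y ^ k := by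
      rw [← tsum_mul_left]
      exact tsum_congr fun k => by rw [show k+1+n = k+(n+1) by omega, pow_succ]; ring
    have hshift_b : ∑' k, b (k + 1 + n) * y ^ (k+1) = y * ∑' k, b (k + (n+1)) * y ^ k := by
      rw [← tsum_mul_left]
      exact tsum_congr fun k => by rw [show k+1+n = k+(n+1) by omega, pow_succ]; ring
    rw [hshift_a] at hA
    rw [hshift_b] at hB
    simp only [zero_add, pow_zero, mul_one] at hA hB
    set Ay := ∑' k, a (k + (n+1)) * y ^ k with hAy
    set By := ∑' k, b (k + (n+1)) * y ^ k with hBy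
    have hAy0 : 0 ≤ Ay := tsum_nonneg fun k => mul_nonneg (ha0 _) (pow_nonneg hy0.le _)
    have hBy0 : 0 ≤ By := tsum_nonneg fun k => mul_nonneg (hb0 _) (pow_nonneg hy0.le _)
    have hAyC : Ay ≤ Ca := by
      refine Summable.tsum_le_tsum (fun k => ?_) (hsy a ha0 hsa y hy0.le hy1 (n+1)) hsa'
      calc a (k + (n+1)) * y ^ k ≤ a (k + (n+1)) * 1 :=
            mul_le_mul_of_nonneg_left (pow_le_one₀ hy0.le hy1) (ha0 _)
        _ = a (k + (n+1)) := mul_one _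
    have hByC : By ≤ Cb := by
      refine Summable.tsum_le_tsum (fun k => ?_) (hsy b hb0 hsb y hy0.le hy1 (n+1)) hsb'
      calc b (k + (n+1)) * y ^ k ≤ b (k + (n+1)) * 1 :=
            mul_le_mul_of_nonneg_left (pow_le_one₀ hy0.le hy1) (hb0 _)
        _ = b (k + (n+1)) := mul_one _
    rw [hA, hB] at hAB
    have hd : a n - b n = y * (By - Ay) := by
      have : a n - b n = y * By - y * Ay := by linarith
      rw [this]; ring
    rw [hd, abs_mul, abs_of_pos hy0]
    refine mul_le_mul_of_nonneg_left ?_ hy0.le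
    rw [abs_sub_le_iff]
    constructor <;> linarith
  by_contra hne
  have hd0 : 0 < |a n - b n| := abs_pos.mpr (sub_ne_zero.mpr hne)
  set d := |a n - b n| with hdd
  have hC1 : (0:ℝ) < Ca + Cb + 1 := by linarith
  have hy0 : 0 < min 1 (d / (2*(Ca+Cb+1))) := lt_min one_pos (by positivity)
  have hkey := key _ hy0 (min_le_left _ _)
  have hle : min 1 (d / (2*(Ca+Cb+1))) * (Ca + Cb) ≤ (d / (2*(Ca+Cb+1))) * (Ca+Cb+1) :=
    mul_le_mul (min_le_right _ _) (by linarith) (by linarith) (by positivity)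
  have hhalf : (d / (2*(Ca+Cb+1))) * (Ca+Cb+1) = d / 2 := by
    field_simp
  linarith

end ZetaFourAux

open ZetaFourAux in
theorem zeta_four_rep_eval (n : ℕ) :
    zetaFourRep n = 2 * 4 ^ n * π ^ (4 * n) / (Nat.factorial (4 * n + 2)) := by
  have h1 : (1:ℝ) ≠ 0 := one_ne_zero
  have hsa : Summable zetaFourRep := by
    have h := (hasSum_zeta_pow 1 (tendsto_partial_prod h1)).summable
    simpa using h
  have hsb : Summable (fun n : ℕ =>
      (2 * 4 ^ n * π ^ (4 * n) / (Nat.factorial (4 * n + 2)) : ℝ)) := by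
    have h := (hasSum_target h1).summable
    simpa using h
  have ha0 : ∀ n, 0 ≤ zetaFourRep n := fun n =>
    tsum_nonneg fun f => Finset.prod_nonneg fun j _ => by positivity
  have hb0 : ∀ n : ℕ, 0 ≤ (2 * 4 ^ n * π ^ (4 * n) / (Nat.factorial (4 * n + 2)) : ℝ) :=
    fun n => by positivity
  have heq : ∀ y : ℝ, 0 < y → y ≤ 1 →
      ∑' n, zetaFourRep n * y ^ n =
        ∑' n : ℕ, (2 * 4 ^ n * π ^ (4 * n) / (Nat.factorial (4 * n + 2)) : ℝ) * y ^ n := by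
    intro y hy0 hy1
    set t := y ^ ((1:ℝ)/4) with htdef
    have ht0 : 0 < t := Real.rpow_pos_of_pos hy0 _
    have ht4 : t ^ (4:ℕ) = y := by
      rw [htdef, ← Real.rpow_natCast (y ^ ((1:ℝ)/4)) 4, ← Real.rpow_mul hy0.le]
      norm_num
    rw [← ht4, (hasSum_zeta_pow t (tendsto_partial_prod ht0.ne')).tsum_eq,
      (hasSum_target ht0.ne').tsum_eq]
  exact congrFun (coeff_unique ha0 hb0 hsa hsb heq) n
end

section
/- For every non-negative integer n, ζ(n+2, {1}^n) = ζ(n+2, 1, 1, …, 1) (with n ones) is symmetric: for all non-negative integers m, n, ζ(m+2, {1}^n) = ζ(n+2, {1}^m). -/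
open scoped BigOperators

/-- The multiple zeta value `ζ(s 0, s 1, …, s (k-1))` with positive-integer arguments. -/
noncomputable def mzv (k : ℕ) (s : Fin k → ℕ) : ℝ :=
  ∑' n : {f : Fin k → ℕ // (∀ i j : Fin k, i < j → f j < f i) ∧ ∀ j, 0 < f j},
    ∏ j : Fin k, (1 / (n.1 j : ℝ) ^ (s j))

namespace MzvD
open ENNReal Filter Topology

noncomputable def conn (a b : ℕ) : ℝ≥0∞ :=
  ((a.factorial * b.factorial : ℕ) : ℝ≥0∞) / (((a + b).factorial : ℕ) : ℝ≥0∞)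

lemma conn_zero_right (a : ℕ) : conn a 0 = 1 := by
  simp [conn, ENNReal.div_self, Nat.factorial_ne_zero,
    (Nat.cast_ne_zero (R := ℝ≥0∞)).2 (Nat.factorial_ne_zero a)]

lemma conn_zero_left (b : ℕ) : conn 0 b = 1 := by
  simp [conn, ENNReal.div_self, (Nat.cast_ne_zero (R := ℝ≥0∞)).2 (Nat.factorial_ne_zero b)]

lemma conn_comm (a b : ℕ) : conn a b = conn b a := by
  simp [conn, Nat.mul_comm, Nat.add_comm]

lemma conn_ne_top (a b : ℕ) : conn a b ≠ ⊤ := by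
  simp [conn, ENNReal.div_eq_top, ENNReal.mul_eq_top,
    (Nat.cast_ne_zero (R := ℝ≥0∞)).2 (Nat.factorial_ne_zero (a+b))]

lemma conn_le (a b : ℕ) (hb : 0 < b) :
    conn a b ≤ ((b.factorial : ℕ) : ℝ≥0∞) / ((a+1 : ℕ) : ℝ≥0∞) := by
  have h : a.factorial * (a+1) ≤ (a+b).factorial := by
    calc a.factorial * (a+1) = (a+1).factorial := by rw [Nat.factorial_succ]; ring
    _ ≤ (a+b).factorial := Nat.factorial_le (by omega)
  calc conn a b ≤ ((a.factorial * b.factorial : ℕ) : ℝ≥0∞) / ((a.factorial * (a+1) : ℕ) : ℝ≥0∞) :=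
        ENNReal.div_le_div le_rfl (by exact_mod_cast h)
    _ = ((b.factorial : ℕ) : ℝ≥0∞) / ((a+1 : ℕ) : ℝ≥0∞) := by
        push_cast
        exact ENNReal.mul_div_mul_left _ _
          ((Nat.cast_ne_zero (R := ℝ≥0∞)).2 (Nat.factorial_ne_zero a)) (ENNReal.natCast_ne_top _)


lemma conn_step (t N : ℕ) (hN : 0 < N) :
    ((N : ℕ) : ℝ≥0∞)⁻¹ * conn t N
      = (((t+1 : ℕ)) : ℝ≥0∞)⁻¹ * conn (t+1) N + ((N : ℕ) : ℝ≥0∞)⁻¹ * conn (t+1) N := by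
  have hNinv : (((N : ℕ) : ℝ≥0∞))⁻¹ ≠ ⊤ := by
    simp [ENNReal.inv_ne_top, Nat.cast_ne_zero, hN.ne']
  have htinv : ((((t+1 : ℕ)) : ℝ≥0∞))⁻¹ ≠ ⊤ := by
    simp [ENNReal.inv_ne_top, Nat.cast_ne_zero]
  rw [← ENNReal.toReal_eq_toReal_iff'
      (by exact ENNReal.mul_ne_top hNinv (conn_ne_top _ _))
      (by exact ENNReal.add_ne_top.2 ⟨ENNReal.mul_ne_top htinv (conn_ne_top _ _),
            ENNReal.mul_ne_top hNinv (conn_ne_top _ _)⟩)]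
  have h2 : (t+1+N).factorial = (t+N+1) * (t+N).factorial := by
    rw [show t+1+N = (t+N)+1 by omega, Nat.factorial_succ]
  rw [ENNReal.toReal_add (ENNReal.mul_ne_top htinv (conn_ne_top (t+1) N))
      (ENNReal.mul_ne_top hNinv (conn_ne_top (t+1) N))]
  simp only [conn, ENNReal.toReal_mul, ENNReal.toReal_inv, ENNReal.toReal_div,
    ENNReal.toReal_natCast]
  rw [Nat.factorial_succ, h2]
  have hN' : (N : ℝ) ≠ 0 := Nat.cast_ne_zero.2 hN.ne'
  have h1 : ((t+N).factorial : ℝ) ≠ 0 := Nat.cast_ne_zero.2 (Nat.factorial_ne_zero _)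
  have h3 : ((t:ℝ)+1) ≠ 0 := by positivity
  have h4 : ((t:ℝ)+(N:ℝ)+1) ≠ 0 := by positivity
  push_cast
  field_simp
  ring


lemma conn_tendsto (L N : ℕ) (hN : 0 < N) :
    Tendsto (fun K : ℕ => ((N : ℕ) : ℝ≥0∞)⁻¹ * conn (L + K) N) atTop (𝓝 0) := by
  have hb : Tendsto (fun K : ℕ => ((N.factorial : ℕ) : ℝ≥0∞) * (((L + K + 1 : ℕ)) : ℝ≥0∞)⁻¹)
      atTop (𝓝 0) := by
    have h1 : Tendsto (fun K : ℕ => (L + K + 1 : ℕ)) atTop atTop :=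
      tendsto_atTop_mono (fun K => by simp only [id_eq]; omega) tendsto_id
    have h2 : Tendsto (fun K : ℕ => (((L + K + 1 : ℕ)) : ℝ≥0∞)⁻¹) atTop (𝓝 0) :=
      ENNReal.tendsto_inv_nat_nhds_zero.comp h1
    have := ENNReal.Tendsto.const_mul h2 (Or.inr (ENNReal.natCast_ne_top N.factorial))
    simpa using this
  apply tendsto_of_tendsto_of_tendsto_of_le_of_le tendsto_const_nhds hb
  · intro K; exact zero_le
  · intro K
    have hinv : ((N : ℕ) : ℝ≥0∞)⁻¹ ≤ 1 := by
      simp only [ENNReal.inv_le_one]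
      exact_mod_cast Nat.one_le_iff_ne_zero.2 hN.ne'
    calc ((N : ℕ) : ℝ≥0∞)⁻¹ * conn (L + K) N ≤ 1 * conn (L + K) N :=
        mul_le_mul_left hinv _
    _ = conn (L + K) N := one_mul _
    _ ≤ ((N.factorial : ℕ) : ℝ≥0∞) / ((L + K + 1 : ℕ) : ℝ≥0∞) := conn_le _ _ hN
    _ = ((N.factorial : ℕ) : ℝ≥0∞) * (((L + K + 1 : ℕ)) : ℝ≥0∞)⁻¹ := by
        rw [ENNReal.div_eq_inv_mul, mul_comm]

def teleEquiv (L : ℕ) : ℕ ≃ {m : ℕ // L < m} where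
  toFun := fun k => ⟨L + k + 1, by omega⟩
  invFun := fun m => m.1 - (L + 1)
  left_inv := fun k => by simp
  right_inv := fun m => by ext; have := m.2; simp; omega

lemma tele (L N : ℕ) (hN : 0 < N) :
    ∑' m : {m : ℕ // L < m}, ((m.1 : ℝ≥0∞))⁻¹ * conn m.1 N
      = ((N : ℝ≥0∞))⁻¹ * conn L N := by
  rw [← (teleEquiv L).tsum_eq]
  set G : ℕ → ℝ≥0∞ := fun k => (((L + k + 1 : ℕ)) : ℝ≥0∞)⁻¹ * conn (L + k + 1) N with hG
  have he : ∀ k : ℕ, (((((teleEquiv L) k).1 : ℕ)) : ℝ≥0∞)⁻¹ * conn ((teleEquiv L) k).1 N = G k :=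
    fun k => rfl
  simp only [he]
  have partial_eq : ∀ K : ℕ,
      ((N : ℝ≥0∞))⁻¹ * conn L N
        = (∑ k ∈ Finset.range K, G k) + ((N : ℝ≥0∞))⁻¹ * conn (L + K) N := by
    intro K
    induction K with
    | zero => simp
    | succ K ih =>
      rw [ih, Finset.sum_range_succ, conn_step (L + K) N hN, hG]
      simp only [show L + K + 1 = L + (K + 1) by omega]
      ring
  have h1 : Tendsto (fun K => ∑ k ∈ Finset.range K, G k) atTop (𝓝 (∑' k, G k)) :=
    ENNReal.tendsto_nat_tsum G
  have h2 := conn_tendsto L N hN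
  have h3 : Tendsto (fun K : ℕ => (∑ k ∈ Finset.range K, G k)
      + ((N : ℝ≥0∞))⁻¹ * conn (L + K) N) atTop (𝓝 ((∑' k, G k) + 0)) := h1.add h2
  have h4 : Tendsto (fun _ : ℕ => ((N : ℝ≥0∞))⁻¹ * conn L N) atTop
      (𝓝 (((N : ℝ≥0∞))⁻¹ * conn L N)) := tendsto_const_nhds
  have := tendsto_nhds_unique h4 (by simpa only [← partial_eq] using h3)
  rw [this, add_zero]


def D (k : ℕ) := {f : Fin k → ℕ // (∀ i j : Fin k, i < j → f j < f i) ∧ ∀ j, 0 < f j}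

def top {k : ℕ} (f : D k) : ℕ := if h : 0 < k then f.1 ⟨0, h⟩ else 0

lemma top_succ {k : ℕ} (f : D (k+1)) : top f = f.1 0 := by
  simp only [top, Nat.succ_pos, dif_pos]
  rfl

lemma top_pos {k : ℕ} (hk : 0 < k) (f : D k) : 0 < top f := by
  simp only [top, hk, dif_pos]
  exact f.2.2 _

lemma le_top {k : ℕ} (f : D k) (j : Fin k) : f.1 j ≤ top f := by
  have hk : 0 < k := j.pos
  simp only [top, hk, dif_pos]
  rcases Nat.eq_zero_or_pos j.1 with h | h
  · have : j = ⟨0, hk⟩ := Fin.ext h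
    rw [this]
  · exact (f.2.1 ⟨0, hk⟩ j h).le

instance : Unique (D 0) where
  default := ⟨fun j => j.elim0, fun i => i.elim0, fun j => j.elim0⟩
  uniq := fun f => Subtype.ext (funext fun j => j.elim0)

def consD {k : ℕ} (x : Σ g : D k, {m : ℕ // top g < m}) : D (k+1) :=
  ⟨Fin.cons x.2.1 x.1.1, by
    constructor
    · intro i j hij
      rcases Fin.eq_zero_or_eq_succ j with rfl | ⟨j', rfl⟩
      · exact absurd hij (by simp [Fin.lt_def])
      rcases Fin.eq_zero_or_eq_succ i with rfl | ⟨i', rfl⟩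
      · simp only [Fin.cons_zero, Fin.cons_succ]
        exact lt_of_le_of_lt (le_top x.1 j') x.2.2
      · simp only [Fin.cons_succ]
        exact x.1.2.1 i' j' (Fin.succ_lt_succ_iff.1 hij)
    · intro j
      rcases Fin.eq_zero_or_eq_succ j with rfl | ⟨j', rfl⟩
      · simp only [Fin.cons_zero]
        exact lt_of_le_of_lt (Nat.zero_le _) x.2.2
      · simp only [Fin.cons_succ]
        exact x.1.2.2 j'⟩

lemma consD_val {k : ℕ} (x : Σ g : D k, {m : ℕ // top g < m}) :
    (consD x).1 = Fin.cons x.2.1 x.1.1 := rfl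

lemma consD_bij {k : ℕ} : Function.Bijective (consD (k := k)) := by
  constructor
  · rintro ⟨⟨g, hg⟩, ⟨m, hm⟩⟩ ⟨⟨g', hg'⟩, ⟨m', hm'⟩⟩ h
    have h1 : g = g' := by
      funext j
      have := congrArg (fun f : D (k+1) => f.1 j.succ) h
      simpa [consD] using this
    subst h1
    have h2 : m = m' := by
      have := congrArg (fun f : D (k+1) => f.1 0) h
      simpa [consD] using this
    subst h2
    rfl
  · intro f
    refine ⟨⟨⟨fun j => f.1 j.succ, ⟨fun i j hij => f.2.1 i.succ j.succ
        (Fin.succ_lt_succ_iff.2 hij),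
        fun j => f.2.2 _⟩⟩, ⟨f.1 0, ?_⟩⟩, ?_⟩
    · by_cases hk : 0 < k
      · simp only [top, hk, dif_pos]
        exact f.2.1 0 (Fin.succ ⟨0, hk⟩) (by simp [Fin.lt_def])
      · simp only [top, hk, dif_neg, not_false_iff]
        exact f.2.2 0
    · refine Subtype.ext (funext fun j => ?_)
      rcases Fin.eq_zero_or_eq_succ j with rfl | ⟨j', rfl⟩ <;> simp [consD]


noncomputable def consEquiv {k : ℕ} : (Σ g : D k, {m : ℕ // top g < m}) ≃ D (k+1) :=
  Equiv.ofBijective _ consD_bij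

lemma tsum_consD {k : ℕ} (F : D (k+1) → ℝ≥0∞) :
    ∑' f : D (k+1), F f = ∑' g : D k, ∑' m : {m : ℕ // top g < m}, F (consD ⟨g, m⟩) := by
  rw [← (consEquiv (k := k)).tsum_eq F]
  exact ENNReal.tsum_sigma' _

lemma top_consD {k : ℕ} (g : D k) (m : {m : ℕ // top g < m}) :
    top (consD ⟨g, m⟩) = m.1 := by
  rw [top_succ, consD_val]
  rfl

noncomputable def w (k e : ℕ) (f : Fin k → ℕ) : ℝ≥0∞ :=
  ∏ j : Fin k, (((f j : ℕ) : ℝ≥0∞) ^ (if (j : ℕ) = 0 then e else 1))⁻¹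

lemma w_zero (e : ℕ) (f : Fin 0 → ℕ) : w 0 e f = 1 := by simp [w]

lemma w_cons {k : ℕ} (e m : ℕ) (g : Fin k → ℕ) :
    w (k+1) e (Fin.cons m g) = (((m : ℕ) : ℝ≥0∞) ^ e)⁻¹ * w k 1 g := by
  simp [w, Fin.prod_univ_succ, Fin.val_succ]

lemma w_succ_top {k : ℕ} (e : ℕ) (f : D (k+1)) :
    w (k+1) (e+1) f.1 = ((f.1 0 : ℝ≥0∞))⁻¹ * w (k+1) e f.1 := by
  have hx : ((f.1 0 : ℕ) : ℝ≥0∞) ≠ 0 := by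
    exact_mod_cast (f.2.2 0).ne'
  rw [w, w, Fin.prod_univ_succ, Fin.prod_univ_succ, ← mul_assoc]
  congr 1
  simp only [Fin.val_zero, eq_self_iff_true, if_true]
  rw [pow_succ, ENNReal.mul_inv (Or.inl (pow_ne_zero e hx)) (Or.inl (ENNReal.pow_ne_top
    (ENNReal.natCast_ne_top _))), mul_comm]

noncomputable def Z (r a s b : ℕ) : ℝ≥0∞ :=
  ∑' p : D r × D s, w r a p.1.1 * w s b p.2.1 * conn (top p.1) (top p.2)

noncomputable def E (k e : ℕ) : ℝ≥0∞ := ∑' f : D k, w k e f.1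

lemma Z_left (r a : ℕ) : Z r a 0 1 = E r a := by
  rw [Z, ENNReal.tsum_prod']
  refine tsum_congr fun p1 => ?_
  rw [tsum_eq_single (default : D 0) (fun b hb => absurd (Subsingleton.elim b default) hb)]
  simp [w_zero, conn_zero_right, top]

lemma Z_right (s b : ℕ) : Z 0 1 s b = E s b := by
  rw [Z, ENNReal.tsum_prod']
  rw [tsum_eq_single (default : D 0) (fun b hb => absurd (Subsingleton.elim b default) hb)]
  refine tsum_congr fun p2 => ?_
  simp [w_zero, conn_zero_left, top]

lemma transportA (r a s : ℕ) : Z (r+1) (a+1) s 1 = Z (r+1) a (s+1) 1 := by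
  rw [Z, Z, ENNReal.tsum_prod', ENNReal.tsum_prod']
  refine tsum_congr fun p1 => ?_
  rw [tsum_consD (fun q => w (r+1) a p1.1 * w (s+1) 1 q.1 * conn (top p1) (top q))]
  refine tsum_congr fun g => ?_
  have key : ∑' m : {m : ℕ // top g < m},
      w (r+1) a p1.1 * w (s+1) 1 (consD ⟨g, m⟩).1 * conn (top p1) (top (consD ⟨g, m⟩))
      = (w (r+1) a p1.1 * w s 1 g.1) *
        (((top p1 : ℕ) : ℝ≥0∞)⁻¹ * conn (top g) (top p1)) := by
    rw [← tele (top g) (top p1) (top_pos (Nat.succ_pos r) p1), ← ENNReal.tsum_mul_left]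
    refine tsum_congr fun m => ?_
    rw [consD_val, top_consD, w_cons, pow_one, conn_comm]
    ring
  rw [key, w_succ_top a p1, ← top_succ, conn_comm]
  ring

lemma transportB (r s b : ℕ) : Z (r+1) 1 (s+1) b = Z r 1 (s+1) (b+1) := by
  rw [Z, Z, ENNReal.tsum_prod', ENNReal.tsum_prod']
  rw [tsum_consD (fun q => ∑' p2 : D (s+1), w (r+1) 1 q.1 * w (s+1) b p2.1
        * conn (top q) (top p2))]
  refine tsum_congr fun g => ?_
  rw [ENNReal.tsum_comm]
  refine tsum_congr fun p2 => ?_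
  have key : ∑' m : {m : ℕ // top g < m},
      w (r+1) 1 (consD ⟨g, m⟩).1 * w (s+1) b p2.1 * conn (top (consD ⟨g, m⟩)) (top p2)
      = (w r 1 g.1 * w (s+1) b p2.1) *
        (((top p2 : ℕ) : ℝ≥0∞)⁻¹ * conn (top g) (top p2)) := by
    rw [← tele (top g) (top p2) (top_pos (Nat.succ_pos s) p2), ← ENNReal.tsum_mul_left]
    refine tsum_congr fun m => ?_
    rw [consD_val, top_consD, w_cons, pow_one]
    ring
  rw [key, w_succ_top b p2, ← top_succ]
  ring

lemma phase1 (r : ℕ) : ∀ a s : ℕ, Z (r+1) (a+1) s 1 = Z (r+1) 1 (s+a) 1 := by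
  intro a
  induction a with
  | zero => intro s; simp
  | succ a ih =>
    intro s
    rw [transportA, ih (s+1), show s+1+a = s+(a+1) by omega]

lemma phase2 (s : ℕ) : ∀ r b : ℕ, Z r 1 (s+1) b = Z 0 1 (s+1) (b+r) := by
  intro r
  induction r with
  | zero => intro b; simp
  | succ r ih =>
    intro b
    rw [transportB, ih (b+1), show b+1+r = b+(r+1) by omega]

lemma main (m n : ℕ) : E (n+1) (m+2) = E (m+1) (n+2) := by
  rw [← Z_left (n+1) (m+2), ← Z_right (m+1) (n+2)]
  have h1 : Z (n+1) (m+2) 0 1 = Z (n+1) 1 (m+1) 1 := by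
    have := phase1 n (m+1) 0
    simpa using this
  rw [h1]
  have h2 := phase2 m (n+1) 1
  rw [h2, show 1+(n+1) = n+2 by omega]


lemma mzv_eq_E (k e : ℕ) :
    mzv (k+1) (fun j => if j = 0 then e else 1) = (E (k+1) e).toReal := by
  rw [mzv, E, ENNReal.tsum_toReal_eq]
  · refine tsum_congr fun f => ?_
    rw [w, ENNReal.toReal_prod]
    refine Finset.prod_congr rfl fun j _ => ?_
    rcases eq_or_ne j 0 with rfl | hj
    · simp [one_div, ENNReal.toReal_inv, ENNReal.toReal_pow, ENNReal.toReal_natCast]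
    · have hj' : ((j : ℕ)) ≠ 0 := fun hc => hj (Fin.ext (by simp [hc]))
      simp [one_div, hj, hj', ENNReal.toReal_inv, ENNReal.toReal_pow, ENNReal.toReal_natCast]
  · intro f
    rw [w]
    refine ENNReal.prod_ne_top fun j _ => ?_
    refine ENNReal.inv_ne_top.2 (pow_ne_zero _ ?_)
    exact_mod_cast (f.2.2 j).ne'


end MzvD

theorem mzv_height_one_duality (m n : ℕ) :
    mzv (n + 1) (fun j => if j = 0 then m + 2 else 1) =
      mzv (m + 1) (fun j => if j = 0 then n + 2 else 1) := by
  rw [MzvD.mzv_eq_E n (m+2), MzvD.mzv_eq_E m (n+2), MzvD.main m n]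
end
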